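/- arXiv:2303.00699 — 4 statements merged into one kernel-verified Lean document; each statement's English description precedes it below -/
import Mathlib

section
/- The congruence lattice of any lattice is distributive. -/
/-- A congruence of a lattice: an equivalence relation compatible with `⊔` and `⊓`. -/
structure LatCon (α : Type*) [Lattice α] where
  r : α → α → Prop
  refl : ∀ a, r a a
  symm : ∀ {a b}, r a b → r b a
  trans : ∀ {a b c}, r a b → r b c → r a c
  sup_comp : ∀ {a b c d}, r a b → r c d → r (a ⊔ c) (b ⊔ d)
  inf_comp : ∀ {a b c d}, r a b → r c d → r (a ⊓ c) (b ⊓ d)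

namespace LatCon
variable {α : Type*} [Lattice α]

theorem ext' : ∀ {c d : LatCon α}, c.r = d.r → c = d := by
  rintro ⟨r1, _, _, _, _, _⟩ ⟨r2, _, _, _, _, _⟩ h
  subst h; rfl

instance : PartialOrder (LatCon α) where
  le c d := ∀ a b, c.r a b → d.r a b
  le_refl c := fun _ _ h => h
  le_trans c d e h1 h2 := fun a b h => h2 a b (h1 a b h)
  le_antisymm c d h1 h2 := ext' (by funext a b; exact propext ⟨h1 a b, h2 a b⟩)

instance : InfSet (LatCon α) where
  sInf S :=
    { r := fun a b => ∀ c ∈ S, c.r a b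
      refl := fun a c _ => c.refl a
      symm := fun h c hc => c.symm (h c hc)
      trans := fun h1 h2 c hc => c.trans (h1 c hc) (h2 c hc)
      sup_comp := fun h1 h2 c hc => c.sup_comp (h1 c hc) (h2 c hc)
      inf_comp := fun h1 h2 c hc => c.inf_comp (h1 c hc) (h2 c hc) }

/-- The congruence lattice `Con α`. -/
instance : CompleteLattice (LatCon α) :=
  completeLatticeOfInf _ (fun S =>
    ⟨fun c hc a b h => h c hc, fun c hc a b h d hd => hc hd a b h⟩)

/-- `con (a, b)`: the smallest congruence collapsing `a` and `b`. -/
def gen (a b : α) : LatCon α := sInf {c : LatCon α | c.r a b}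

end LatCon

/-- A finite lattice is (upper) semimodular. -/
def Semimodular (α : Type*) [Lattice α] : Prop :=
  ∀ a b : α, a ⊓ b ⋖ a → b ⋖ a ⊔ b

/-- A finite lattice is planar iff its order dimension is at most `2`
(Baker–Fishburn–Roberts); we use this diagram-free characterization. -/
def PlanarLat (α : Type*) [Lattice α] : Prop :=
  ∃ f g : α → ℕ, ∀ x y : α, x ≤ y ↔ f x ≤ f y ∧ g x ≤ g y

/-- A lattice is slim iff it has no `M₃` sublattice, i.e. there is no triple of
pairwise distinct elements with all pairwise meets equal and all pairwise joins equal. -/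
def SlimLat (α : Type*) [Lattice α] : Prop :=
  ¬ ∃ a b c : α, a ≠ b ∧ a ≠ c ∧ b ≠ c ∧
      a ⊓ b = b ⊓ c ∧ a ⊓ c = b ⊓ c ∧ a ⊔ b = b ⊔ c ∧ a ⊔ c = b ⊔ c

/-- A slim planar semimodular (SPS) lattice. -/
def IsSPS (α : Type*) [Lattice α] : Prop :=
  PlanarLat α ∧ Semimodular α ∧ SlimLat α
namespace LatConAux
open Relation
variable {α : Type*} [Lattice α]

/-- A congruence relates `a` and `b` iff it relates their meet and join. -/
theorem r_inf_sup (c : LatCon α) {a b : α} (h : c.r a b) : c.r (a ⊓ b) (a ⊔ b) := by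
  have h1 : c.r (a ⊓ b) b := by
    have := c.inf_comp h (c.refl b); simpa using this
  have h2 : c.r b (a ⊔ b) := by
    have := c.sup_comp (c.symm h) (c.refl b); simpa using this
  exact c.trans h1 h2

/-- Any element between related `a ≤ b` is related to `a`. -/
theorem r_of_between (c : LatCon α) {a b w : α} (h : c.r a b) (h1 : a ≤ w) (h2 : w ≤ b) :
    c.r a w := by
  have := c.inf_comp h (c.refl w)
  rw [inf_of_le_left h1, inf_comm, inf_of_le_left h2] at this
  exact this

/-- The explicit join of two congruences: reflexive transitive closure of the union. -/
def cjoin (y z : LatCon α) : LatCon α where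
  r a b := ReflTransGen (fun u v => y.r u v ∨ z.r u v) a b
  refl a := ReflTransGen.refl
  symm {a b} h := by
    refine (@ReflTransGen.symmetric _ _ ⟨?_⟩).symm _ _ h
    rintro u v (h | h)
    · exact Or.inl (y.symm h)
    · exact Or.inr (z.symm h)
  trans h1 h2 := h1.trans h2
  sup_comp {a b c d} h1 h2 := by
    have step : ∀ {u v t : α}, (y.r u v ∨ z.r u v) →
        (y.r (u ⊔ t) (v ⊔ t) ∨ z.r (u ⊔ t) (v ⊔ t)) := by
      rintro u v t (h | h)
      · exact Or.inl (y.sup_comp h (y.refl t))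
      · exact Or.inr (z.sup_comp h (z.refl t))
    have part1 : ReflTransGen (fun u v => y.r u v ∨ z.r u v) (a ⊔ c) (b ⊔ c) := by
      induction h1 with
      | refl => exact ReflTransGen.refl
      | tail _ h ih => exact ih.tail (step h)
    have part2 : ReflTransGen (fun u v => y.r u v ∨ z.r u v) (b ⊔ c) (b ⊔ d) := by
      induction h2 with
      | refl => exact ReflTransGen.refl
      | tail _ h ih =>
        refine ih.tail ?_
        rw [sup_comm b _, sup_comm b _]
        exact step h
    exact part1.trans part2
  inf_comp {a b c d} h1 h2 := by
    have step : ∀ {u v t : α}, (y.r u v ∨ z.r u v) →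
        (y.r (u ⊓ t) (v ⊓ t) ∨ z.r (u ⊓ t) (v ⊓ t)) := by
      rintro u v t (h | h)
      · exact Or.inl (y.inf_comp h (y.refl t))
      · exact Or.inr (z.inf_comp h (z.refl t))
    have part1 : ReflTransGen (fun u v => y.r u v ∨ z.r u v) (a ⊓ c) (b ⊓ c) := by
      induction h1 with
      | refl => exact ReflTransGen.refl
      | tail _ h ih => exact ih.tail (step h)
    have part2 : ReflTransGen (fun u v => y.r u v ∨ z.r u v) (b ⊓ c) (b ⊓ d) := by
      induction h2 with
      | refl => exact ReflTransGen.refl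
      | tail _ h ih =>
        refine ih.tail ?_
        rw [inf_comm b _, inf_comm b _]
        exact step h
    exact part1.trans part2

theorem sup_le_cjoin (y z : LatCon α) : y ⊔ z ≤ cjoin y z := by
  refine sup_le ?_ ?_
  · exact fun a b h => ReflTransGen.single (Or.inl h)
  · exact fun a b h => ReflTransGen.single (Or.inr h)

end LatConAux

/-- Funayama–Nakayama: the congruence lattice of any lattice is distributive. -/
theorem latCon_distributive (α : Type*) [Lattice α] :
    ∀ x y z : LatCon α, x ⊓ (y ⊔ z) = (x ⊓ y) ⊔ (x ⊓ z) := by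
  intro x y z
  refine le_antisymm ?_ (sup_le (inf_le_inf_left x le_sup_left) (inf_le_inf_left x le_sup_right))
  intro a b h
  have hx : x.r a b := (inf_le_left : x ⊓ (y ⊔ z) ≤ x) a b h
  have hyz : (y ⊔ z).r a b := (inf_le_right : x ⊓ (y ⊔ z) ≤ y ⊔ z) a b h
  set T : LatCon α := (x ⊓ y) ⊔ (x ⊓ z) with hT
  -- reduce to the comparable pair a ⊓ b ≤ a ⊔ b
  set a' := a ⊓ b
  set b' := a ⊔ b
  have hx' : x.r a' b' := LatConAux.r_inf_sup x hx
  have hyz' : (LatConAux.cjoin y z).r a' b' :=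
    LatConAux.sup_le_cjoin y z a' b' (LatConAux.r_inf_sup (y ⊔ z) hyz)
  have hab : a' ≤ b' := inf_le_sup
  -- main chain induction
  have key : ∀ {u : α}, Relation.ReflTransGen (fun u v => y.r u v ∨ z.r u v) a' u →
      T.r a' ((u ⊔ a') ⊓ b') := by
    intro u hu
    induction hu with
    | refl =>
      have : (a' ⊔ a') ⊓ b' = a' := by simp [inf_of_le_left hab]
      rw [this]; exact T.refl a'
    | @tail u v _ h ih =>
      refine T.trans ih ?_
      set wu := (u ⊔ a') ⊓ b'
      set wv := (v ⊔ a') ⊓ b'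
      have haw : a' ≤ wu := le_inf (le_sup_right) hab
      have haw' : a' ≤ wv := le_inf (le_sup_right) hab
      have hwb : wu ≤ b' := inf_le_right
      have hwb' : wv ≤ b' := inf_le_right
      have hxw : x.r wu wv :=
        x.trans (x.symm (LatConAux.r_of_between x hx' haw hwb))
          (LatConAux.r_of_between x hx' haw' hwb')
      rcases h with h | h
      · have hyw : y.r wu wv := y.inf_comp (y.sup_comp h (y.refl a')) (y.refl b')
        have : (x ⊓ y).r wu wv := by
          intro c hc
          rcases hc with rfl | hc
          · exact hxw
          · rcases hc with rfl; exact hyw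
        exact (le_sup_left : x ⊓ y ≤ T) wu wv this
      · have hzw : z.r wu wv := z.inf_comp (z.sup_comp h (z.refl a')) (z.refl b')
        have : (x ⊓ z).r wu wv := by
          intro c hc
          rcases hc with rfl | hc
          · exact hxw
          · rcases hc with rfl; exact hzw
        exact (le_sup_right : x ⊓ z ≤ T) wu wv this
  have hT' : T.r a' b' := by
    have := key hyz'
    rwa [sup_of_le_left hab, inf_idem] at this
  -- recover T.r a b from T.r (a ⊓ b) (a ⊔ b)
  have h1 : T.r a (a ⊔ b) := by
    have := T.sup_comp (T.refl a) hT'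
    rwa [show a ⊔ a' = a from sup_eq_left.2 inf_le_left,
      show a ⊔ b' = b' from sup_eq_right.2 le_sup_left] at this
  have h2 : T.r b (a ⊔ b) := by
    have := T.sup_comp (T.refl b) hT'
    rwa [show b ⊔ a' = b from sup_eq_left.2 inf_le_right,
      show b ⊔ b' = b' from sup_eq_right.2 le_sup_right] at this
  exact T.trans h1 (T.symm h2)
end

section
/- The three-element chain C₃ is not isomorphic to the congruence lattice of any SPS lattice. -/
set_option linter.unusedSectionVars false

section Aux

variable {L : Type} [Lattice L] [Fintype L]

/-- In a finite order, between `z < x` there is an element covered by `x`. -/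
lemma exists_covby_below {z x : L} (h : z < x) : ∃ w, z ≤ w ∧ w ⋖ x := by
  obtain ⟨w, hw, hmax⟩ := Set.Finite.exists_maximalFor id {w : L | z ≤ w ∧ w < x}
    (Set.toFinite _) ⟨z, le_rfl, h⟩
  refine ⟨w, hw.1, hw.2, fun c hc hcx => ?_⟩
  exact hc.not_ge (hmax ⟨hw.1.trans hc.le, hcx⟩ hc.le)

/-- In a finite order, between `u < v` there is an element covering `u`. -/
lemma exists_covby_above {u v : L} (h : u < v) : ∃ c, u ⋖ c ∧ c ≤ v := by
  obtain ⟨c, hc, hmin⟩ := Set.Finite.exists_minimalFor id {w : L | u < w ∧ w ≤ v}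
    (Set.toFinite _) ⟨v, h, le_rfl⟩
  refine ⟨c, ⟨hc.1, fun d hd hdc => ?_⟩, hc.2⟩
  exact hdc.not_ge (hmin ⟨hd, hdc.le.trans hc.2⟩ hdc.le)

lemma icc_ncard_le (u v : L) : (Set.Icc u v).ncard ≤ Fintype.card L := by
  calc (Set.Icc u v).ncard ≤ (Set.univ : Set L).ncard :=
        Set.ncard_le_ncard (Set.subset_univ _) (Set.toFinite _)
    _ = Fintype.card L := by rw [Set.ncard_univ, Nat.card_eq_fintype_card]

lemma icc_ncard_covby {u v : L} (h : u ⋖ v) : (Set.Icc u v).ncard = 2 := by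
  have : Set.Icc u v = {u, v} := by
    ext w
    simp only [Set.mem_Icc, Set.mem_insert_iff, Set.mem_singleton_iff]
    constructor
    · rintro ⟨h1, h2⟩; exact h.eq_or_eq h1 h2
    · rintro (rfl | rfl)
      · exact ⟨le_rfl, h.le⟩
      · exact ⟨h.le, le_rfl⟩
  rw [this, Set.ncard_pair h.lt.ne]

/-- Key lemma: in a finite semimodular M₃-free lattice, every cover `a` of `z`
is join-prime relative to elements above `z`. -/
lemma cover_prime (hsm : Semimodular L) (hsl : SlimLat L) :
    ∀ n : ℕ, ∀ z a x y : L,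
      (Set.Icc z x).ncard * (Fintype.card L + 1) + (Set.Icc z y).ncard ≤ n →
      z ⋖ a → z ≤ x → z ≤ y → a ≤ x ⊔ y → a ≤ x ∨ a ≤ y := by
  intro n
  induction n with
  | zero =>
    intro z a x y hm hza hzx hzy haxy
    exfalso
    have h1 : 0 < (Set.Icc z x).ncard :=
      (Set.ncard_pos (Set.toFinite _)).mpr ⟨z, le_rfl, hzx⟩
    have h2 : 0 < (Set.Icc z x).ncard * (Fintype.card L + 1) :=
      Nat.mul_pos h1 (Nat.succ_pos _)
    omega
  | succ n ih =>
    intro z a x y hm hza hzx hzy haxy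
    by_cases hax : a ≤ x
    · exact Or.inl hax
    by_cases hay : a ≤ y
    · exact Or.inr hay
    exfalso
    set C := Fintype.card L with hC
    -- basic facts
    have hxz : x ≠ z := by
      rintro rfl
      exact hay (by rwa [sup_eq_right.mpr hzy] at haxy)
    have hyz : y ≠ z := by
      rintro rfl
      exact hax (by rwa [sup_eq_left.mpr hzx] at haxy)
    have hmz : ∀ w, z ≤ w → ¬ a ≤ w → a ⊓ w = z := by
      intro w hzw haw
      rcases hza.eq_or_eq (le_inf hza.le hzw) inf_le_left with h | h
      · exact h
      · exact absurd (inf_eq_left.mp h) haw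
    have covup : ∀ v w, z ⋖ v → z ≤ w → ¬ v ≤ w → w ⋖ w ⊔ v := by
      intro v w hzv hzw hvw
      have hm' : v ⊓ w = z := by
        rcases hzv.eq_or_eq (le_inf hzv.le hzw) inf_le_left with h | h
        · exact h
        · exact absurd (inf_eq_left.mp h) hvw
      have := hsm v w (by rw [hm']; exact hzv)
      rwa [sup_comm] at this
    by_cases hcx : z ⋖ x
    · by_cases hcy : z ⋖ y
      · -- M₃ case
        have hxy : x ⊓ y = z := by
          rcases hcx.eq_or_eq (le_inf hcx.le hzy) inf_le_left with h | h
          · exact h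
          · exact absurd (by rwa [sup_eq_right.mpr (inf_eq_left.mp h)] at haxy) hay
        have hax2 : a ⊓ x = z := hmz x hzx hax
        have hay2 : a ⊓ y = z := hmz y hzy hay
        have hycs : y ⋖ x ⊔ y := hsm x y (by rw [hxy]; exact hcx)
        have hxcs : x ⋖ x ⊔ y := by
          have := hsm y x (by rw [inf_comm, hxy]; exact hcy)
          rwa [sup_comm] at this
        have h1 : a ⊔ x = x ⊔ y := by
          rcases hxcs.eq_or_eq (le_sup_left : x ≤ x ⊔ a)
              (sup_le le_sup_left haxy) with h | h
          · exact absurd (sup_eq_left.mp h) hax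
          · rwa [sup_comm] at h
        have h2 : a ⊔ y = x ⊔ y := by
          rcases hycs.eq_or_eq (le_sup_left : y ≤ y ⊔ a)
              (sup_le le_sup_right haxy) with h | h
          · exact absurd (sup_eq_left.mp h) hay
          · rwa [sup_comm] at h
        refine hsl ⟨a, x, y, ?_, ?_, ?_, ?_, ?_, ?_, ?_⟩
        · rintro rfl; exact hax le_rfl
        · rintro rfl; exact hay le_rfl
        · rintro rfl; exact hcx.lt.ne' (by rw [← hxy, inf_idem])
        · rw [hax2, hxy]
        · rw [hay2, hxy]
        · exact h1
        · exact h2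
      · -- descent on y
        have hyz' : z < y := lt_of_le_of_ne hzy (Ne.symm hyz)
        obtain ⟨y1, hzy1, hy1y⟩ := exists_covby_below hyz'
        have hy1z : z < y1 := hzy1.lt_of_ne (fun h => hcy (h ▸ hy1y))
        have hay1 : ¬ a ≤ y1 := fun h => hay (h.trans hy1y.le)
        have hc1 : y1 ⋖ y1 ⊔ a := covup a y1 hza hzy1 hay1
        have hxy1 : ¬ x ≤ y1 := fun h =>
          hay (haxy.trans (sup_le (h.trans hy1y.le) le_rfl))
        have hc2 : y1 ⋖ y1 ⊔ x := covup x y1 hcx hzy1 hxy1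
        have hmeas1 :
            (Set.Icc y1 (y1 ⊔ x)).ncard * (C + 1) + (Set.Icc y1 y).ncard ≤ n := by
          have e1 : (Set.Icc y1 (y1 ⊔ x)).ncard = 2 := icc_ncard_covby hc2
          have e2 : (Set.Icc z x).ncard = 2 := icc_ncard_covby hcx
          have e3 : (Set.Icc y1 y).ncard < (Set.Icc z y).ncard :=
            Set.ncard_lt_ncard
              ⟨Set.Icc_subset_Icc hzy1 le_rfl,
               fun h => hy1z.not_ge (h ⟨le_rfl, hzy⟩).1⟩ (Set.toFinite _)
          rw [e1]; rw [e2] at hm; omega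
        rcases ih y1 (y1 ⊔ a) (y1 ⊔ x) y hmeas1 hc1 le_sup_left hy1y.le
            (by
              refine sup_le (le_sup_left.trans le_sup_left) ?_
              exact haxy.trans (sup_le (le_sup_right.trans le_sup_left) le_sup_right))
            with h | h
        · -- a ≤ x ⊔ y1 ; second recursive call
          have haxy1 : a ≤ x ⊔ y1 := by
            rw [sup_comm]; exact le_sup_right.trans h
          have hmeas2 :
              (Set.Icc z x).ncard * (C + 1) + (Set.Icc z y1).ncard ≤ n := by
            have e2 : (Set.Icc z x).ncard = 2 := icc_ncard_covby hcx
            have e3 : (Set.Icc z y1).ncard < (Set.Icc z y).ncard :=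
              Set.ncard_lt_ncard
                ⟨Set.Icc_subset_Icc le_rfl hy1y.le,
                 fun h => hy1y.lt.not_ge (h ⟨hzy, le_rfl⟩).2⟩ (Set.toFinite _)
            rw [e2] at hm ⊢; omega
          rcases ih z a x y1 hmeas2 hza hzx hzy1 haxy1 with h2 | h2
          · exact hax h2
          · exact hay (h2.trans hy1y.le)
        · exact hay (le_sup_right.trans h)
    · -- descent on x
      have hxz' : z < x := lt_of_le_of_ne hzx (Ne.symm hxz)
      obtain ⟨x1, hzx1, hx1x⟩ := exists_covby_below hxz'
      have hx1z : z < x1 := hzx1.lt_of_ne (fun h => hcx (h ▸ hx1x))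
      have hax1 : ¬ a ≤ x1 := fun h => hax (h.trans hx1x.le)
      have hc1 : x1 ⋖ x1 ⊔ a := covup a x1 hza hzx1 hax1
      have hmeas1 :
          (Set.Icc x1 x).ncard * (C + 1) + (Set.Icc x1 (x1 ⊔ y)).ncard ≤ n := by
        have e3 : (Set.Icc x1 x).ncard < (Set.Icc z x).ncard :=
          Set.ncard_lt_ncard
            ⟨Set.Icc_subset_Icc hzx1 le_rfl,
             fun h => hx1z.not_ge (h ⟨le_rfl, hzx⟩).1⟩ (Set.toFinite _)
        have b2 : (Set.Icc x1 (x1 ⊔ y)).ncard ≤ C := icc_ncard_le _ _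
        have key : (Set.Icc x1 x).ncard * (C + 1) + (C + 1) ≤
            (Set.Icc z x).ncard * (C + 1) := by
          rw [← add_one_mul]
          exact Nat.mul_le_mul_right _ e3
        omega
      rcases ih x1 (x1 ⊔ a) x (x1 ⊔ y) hmeas1 hc1 hx1x.le le_sup_left
          (by
            refine sup_le (le_sup_left.trans le_sup_right) ?_
            exact haxy.trans (sup_le le_sup_left (le_sup_right.trans le_sup_right)))
          with h | h
      · exact hax (le_sup_right.trans h)
      · -- a ≤ x1 ⊔ y
        have haxy2 : a ≤ x1 ⊔ y := le_sup_right.trans h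
        have hmeas2 :
            (Set.Icc z x1).ncard * (C + 1) + (Set.Icc z y).ncard ≤ n := by
          have e3 : (Set.Icc z x1).ncard < (Set.Icc z x).ncard :=
            Set.ncard_lt_ncard
              ⟨Set.Icc_subset_Icc le_rfl hx1x.le,
               fun h => hx1x.lt.not_ge (h ⟨hzx, le_rfl⟩).2⟩ (Set.toFinite _)
          have b2 : (Set.Icc z y).ncard ≤ C := icc_ncard_le _ _
          have key : (Set.Icc z x1).ncard * (C + 1) + (C + 1) ≤
              (Set.Icc z x).ncard * (C + 1) := by
            rw [← add_one_mul]
            exact Nat.mul_le_mul_right _ e3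
          omega
        rcases ih z a x1 y hmeas2 hza hzx1 hzy haxy2 with h2 | h2
        · exact hax (h2.trans hx1x.le)
        · exact hay h2

end Aux

section Main

variable {L : Type} [Lattice L] [Fintype L]

/-- The trivial congruence. -/
def deltaCon (L : Type) [Lattice L] : LatCon L where
  r := Eq
  refl := fun _ => rfl
  symm := Eq.symm
  trans := Eq.trans
  sup_comp := fun h1 h2 => by rw [h1, h2]
  inf_comp := fun h1 h2 => by rw [h1, h2]

/-- The full congruence. -/
def nablaCon (L : Type) [Lattice L] : LatCon L where
  r := fun _ _ => True
  refl := fun _ => trivial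
  symm := fun _ => trivial
  trans := fun _ _ => trivial
  sup_comp := fun _ _ => trivial
  inf_comp := fun _ _ => trivial

/-- The two-block congruence attached to a join-prime element. -/
def primeCon (p : L) (hp : ∀ x y : L, p ≤ x ⊔ y → p ≤ x ∨ p ≤ y) : LatCon L where
  r x y := p ≤ x ↔ p ≤ y
  refl _ := Iff.rfl
  symm := Iff.symm
  trans := Iff.trans
  sup_comp {a b c d} h1 h2 := by
    constructor
    · intro h
      rcases hp _ _ h with hh | hh
      · exact le_sup_of_le_left (h1.mp hh)
      · exact le_sup_of_le_right (h2.mp hh)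
    · intro h
      rcases hp _ _ h with hh | hh
      · exact le_sup_of_le_left (h1.mpr hh)
      · exact le_sup_of_le_right (h2.mpr hh)
  inf_comp {a b c d} h1 h2 := by
    show p ≤ a ⊓ c ↔ p ≤ b ⊓ d
    rw [le_inf_iff, le_inf_iff]
    exact and_congr h1 h2

omit [Fintype L] in
lemma con_ne {c d : LatCon L} {x y : L} (h1 : c.r x y) (h2 : ¬ d.r x y) : c ≠ d :=
  fun he => h2 (he ▸ h1)

/-- Any nontrivial finite semimodular M₃-free lattice has two distinct
nonzero join-prime elements. -/
lemma two_primes (hsm : Semimodular L) (hsl : SlimLat L) (b : L) (hb : ∀ x : L, b ≤ x)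
    (h3 : ∃ u v w : L, u ≠ v ∧ u ≠ w ∧ v ≠ w) :
    ∃ p q : L, p ≠ q ∧ p ≠ b ∧ q ≠ b ∧
      (∀ x y : L, p ≤ x ⊔ y → p ≤ x ∨ p ≤ y) ∧
      (∀ x y : L, q ≤ x ⊔ y → q ≤ x ∨ q ≤ y) := by
  have zprime : ∀ z a x y : L, z ⋖ a → z ≤ x → z ≤ y → a ≤ x ⊔ y → a ≤ x ∨ a ≤ y :=
    fun z a x y => cover_prime hsm hsl _ z a x y le_rfl
  obtain ⟨u, v, w, huv, huw, hvw⟩ := h3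
  have hw1 : ∃ t : L, t ≠ b := by
    by_cases h : u = b
    · exact ⟨v, fun hh => huv (h.trans hh.symm)⟩
    · exact ⟨u, h⟩
  obtain ⟨t, ht⟩ := hw1
  have hbt : b < t := (hb t).lt_of_ne (Ne.symm ht)
  by_cases huniq : ∀ c c' : L, b ⋖ c → b ⋖ c' → c = c'
  · obtain ⟨a, hba, -⟩ := exists_covby_above hbt
    have hbelow : ∀ x : L, x ≠ b → a ≤ x := by
      intro x hx
      obtain ⟨c, hbc, hcx⟩ := exists_covby_above ((hb x).lt_of_ne (Ne.symm hx))
      exact (huniq a c hba hbc) ▸ hcx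
    have hnota : ∃ s : L, ¬ s ≤ a := by
      by_contra hall
      push_neg at hall
      have hba' : ∀ s : L, s = b ∨ s = a := by
        intro s
        by_cases hs : s = b
        · exact Or.inl hs
        · exact Or.inr (le_antisymm (hall s) (hbelow s hs))
      rcases hba' u with h1 | h1 <;> rcases hba' v with h2 | h2 <;>
        rcases hba' w with h3' | h3' <;>
        first
          | exact huv (h1.trans h2.symm)
          | exact huw (h1.trans h3'.symm)
          | exact hvw (h2.trans h3'.symm)
    obtain ⟨s, hs⟩ := hnota
    have has : a < a ⊔ s := left_lt_sup.mpr hs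
    obtain ⟨c, hac, -⟩ := exists_covby_above has
    have hpa : ∀ x y : L, a ≤ x ⊔ y → a ≤ x ∨ a ≤ y := by
      intro x y hxy
      by_cases hx : x = b
      · subst hx
        right
        rwa [sup_eq_right.mpr (hb y)] at hxy
      · exact Or.inl (hbelow x hx)
    have hpc : ∀ x y : L, c ≤ x ⊔ y → c ≤ x ∨ c ≤ y := by
      intro x y hxy
      by_cases hx : x = b
      · subst hx
        right
        rwa [sup_eq_right.mpr (hb y)] at hxy
      by_cases hy : y = b
      · subst hy
        left
        rwa [sup_eq_left.mpr (hb x)] at hxy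
      exact zprime a c x y hac (hbelow x hx) (hbelow y hy) hxy
    exact ⟨a, c, hac.lt.ne, hba.lt.ne', (hba.lt.trans hac.lt).ne', hpa, hpc⟩
  · push_neg at huniq
    obtain ⟨c, c', hbc, hbc', hne⟩ := huniq
    refine ⟨c, c', hne, hbc.lt.ne', hbc'.lt.ne', ?_, ?_⟩
    · exact fun x y h => zprime b c x y hbc (hb x) (hb y) h
    · exact fun x y h => zprime b c' x y hbc' (hb x) (hb y) h

end Main

/-- The three-element chain is not the congruence lattice of any SPS lattice. -/
theorem no_sps_with_three_chain_conLat :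
    ∀ (L : Type) (_ : Lattice L) (_ : Fintype L),
      IsSPS L → ¬ Nonempty (LatCon L ≃o Fin 3) := by
  intro L _ _ hsps hne
  obtain ⟨e⟩ := hne
  obtain ⟨-, hsm, hsl⟩ := hsps
  have h3 : ∃ u v w : L, u ≠ v ∧ u ≠ w ∧ v ≠ w := by
    by_contra hno
    push_neg at hno
    have hdn : ∀ c : LatCon L, c = deltaCon L ∨ c = nablaCon L := by
      intro c
      by_cases hx : ∃ x y : L, x ≠ y ∧ c.r x y
      · right
        obtain ⟨x, y, hxy, hr⟩ := hx
        apply LatCon.ext'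
        funext u v
        apply propext
        refine ⟨fun _ => trivial, fun _ => ?_⟩
        have hu : u = x ∨ u = y := by
          by_contra h
          push_neg at h
          exact hxy (hno u x y h.1 h.2)
        have hv : v = x ∨ v = y := by
          by_contra h
          push_neg at h
          exact hxy (hno v x y h.1 h.2)
        rcases hu with rfl | rfl <;> rcases hv with rfl | rfl
        · exact c.refl _
        · exact hr
        · exact c.symm hr
        · exact c.refl _
      · left
        push_neg at hx
        apply LatCon.ext'
        funext u v
        apply propext
        exact ⟨fun h => by_contra fun hne' => hx u v hne' h, fun h => h ▸ c.refl u⟩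
    have i01 : e.symm 0 ≠ e.symm 1 := fun h => absurd (e.symm.injective h) (by decide)
    have i02 : e.symm 0 ≠ e.symm 2 := fun h => absurd (e.symm.injective h) (by decide)
    have i12 : e.symm 1 ≠ e.symm 2 := fun h => absurd (e.symm.injective h) (by decide)
    rcases hdn (e.symm 0) with h0 | h0 <;> rcases hdn (e.symm 1) with h1 | h1 <;>
      rcases hdn (e.symm 2) with h2 | h2 <;>
      first
        | exact i01 (h0.trans h1.symm)
        | exact i02 (h0.trans h2.symm)
        | exact i12 (h1.trans h2.symm)
  obtain ⟨u0, v0, w0, huv, huw, hvw⟩ := h3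
  have hne' : (Finset.univ : Finset L).Nonempty := ⟨u0, Finset.mem_univ _⟩
  set b : L := Finset.univ.inf' hne' id with hbdef
  have hb : ∀ x : L, b ≤ x := fun x => Finset.inf'_le id (Finset.mem_univ x)
  obtain ⟨p, q, hpq, hpb, hqb, hp, hq⟩ :=
    two_primes hsm hsl b hb ⟨u0, v0, w0, huv, huw, hvw⟩
  have hthird : ∀ s t : L, ∃ w : L, w ≠ s ∧ w ≠ t := by
    intro s t
    by_cases h1 : u0 ≠ s ∧ u0 ≠ t
    · exact ⟨u0, h1⟩
    by_cases h2 : v0 ≠ s ∧ v0 ≠ t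
    · exact ⟨v0, h2⟩
    have h1' : u0 = s ∨ u0 = t := by
      by_cases hs : u0 = s
      · exact Or.inl hs
      · right
        by_cases ht : u0 = t
        · exact ht
        · exact absurd ⟨hs, ht⟩ h1
    have h2' : v0 = s ∨ v0 = t := by
      by_cases hs : v0 = s
      · exact Or.inl hs
      · right
        by_cases ht : v0 = t
        · exact ht
        · exact absurd ⟨hs, ht⟩ h2
    rcases h1' with rfl | rfl
    · rcases h2' with h2' | rfl
      · exact absurd h2'.symm huv
      · exact ⟨w0, Ne.symm huw, Ne.symm hvw⟩
    · rcases h2' with rfl | h2'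
      · exact ⟨w0, Ne.symm hvw, Ne.symm huw⟩
      · exact absurd h2'.symm huv
  -- the four distinct congruences
  set P : LatCon L := primeCon p hp with hPdef
  set Q : LatCon L := primeCon q hq with hQdef
  have hPnr : ¬ P.r b p := fun h => hpb (le_antisymm (h.mpr le_rfl) (hb p))
  have hQnr : ¬ Q.r b q := fun h => hqb (le_antisymm (h.mpr le_rfl) (hb q))
  have hpnb : ¬ p ≤ b := fun h => hpb (le_antisymm h (hb p))
  have hqnb : ¬ q ≤ b := fun h => hqb (le_antisymm h (hb q))
  have nDP : deltaCon L ≠ P := by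
    obtain ⟨w, hws, hwt⟩ := hthird b p
    by_cases hpw : p ≤ w
    · exact (con_ne (show P.r p w from iff_of_true le_rfl hpw)
        (show ¬ (deltaCon L).r p w from fun h => hwt h.symm)).symm
    · exact (con_ne (show P.r b w from iff_of_false hpnb hpw)
        (show ¬ (deltaCon L).r b w from fun h => hws h.symm)).symm
  have nDQ : deltaCon L ≠ Q := by
    obtain ⟨w, hws, hwt⟩ := hthird b q
    by_cases hqw : q ≤ w
    · exact (con_ne (show Q.r q w from iff_of_true le_rfl hqw)
        (show ¬ (deltaCon L).r q w from fun h => hwt h.symm)).symm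
    · exact (con_ne (show Q.r b w from iff_of_false hqnb hqw)
        (show ¬ (deltaCon L).r b w from fun h => hws h.symm)).symm
  have nDN : deltaCon L ≠ nablaCon L :=
    (con_ne (show (nablaCon L).r b p from trivial)
      (show ¬ (deltaCon L).r b p from fun h => hpb h.symm)).symm
  have nPQ : P ≠ Q := by
    by_cases hqp : q ≤ p
    · exact con_ne (show P.r b q from iff_of_false hpnb
        (fun h => hpq (le_antisymm h hqp))) hQnr
    · exact (con_ne (show Q.r b p from iff_of_false hqnb hqp) hPnr).symm
  have nPN : P ≠ nablaCon L :=
    (con_ne (show (nablaCon L).r b p from trivial) hPnr).symm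
  have nQN : Q ≠ nablaCon L :=
    (con_ne (show (nablaCon L).r b q from trivial) hQnr).symm
  have key : ∀ i j k l : Fin 3,
      i = j ∨ i = k ∨ i = l ∨ j = k ∨ j = l ∨ k = l := by decide
  rcases key (e (deltaCon L)) (e P) (e Q) (e (nablaCon L)) with
    h | h | h | h | h | h
  · exact e.injective.ne nDP h
  · exact e.injective.ne nDQ h
  · exact e.injective.ne nDN h
  · exact e.injective.ne nPQ h
  · exact e.injective.ne nPN h
  · exact e.injective.ne nQN h
end

section
/- A rectangular lattice L is a patch lattice if and only if Con L is isomorphic to the glued sum of a finite distributive lattice with the four-element Boolean lattice B₂, i.e., Con L has exactly two coatoms and their meet is the second-highest 'level' element, with the top of Con L covered by exactly these two coatoms whose meet they both cover. -/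
/-- An element of a lattice is doubly irreducible if it is both join- and
meet-irreducible (equivalently, in a finite lattice, it has exactly one lower cover and
exactly one upper cover). -/
def DoublyIrred {α : Type*} [Lattice α] (x : α) : Prop := SupIrred x ∧ InfIrred x

/-- `L` is a rectangular lattice with corners `cl` (left) and `cr` (right): a finite
planar semimodular lattice whose boundary chains contain exactly one doubly irreducible
element each, namely the complementary pair `cl, cr`.  (In a planar lattice every doubly
irreducible element lies on the boundary, by Kelly–Rival, so this is expressed
diagram-freely by saying that `cl` and `cr` are the only doubly irreducible elements.) -/
def IsRectangularWith (α : Type*) [Lattice α] [Fintype α] [BoundedOrder α]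
    (cl cr : α) : Prop :=
  PlanarLat α ∧ Semimodular α ∧ cl ≠ cr ∧
    DoublyIrred cl ∧ DoublyIrred cr ∧
    (∀ x : α, DoublyIrred x → x = cl ∨ x = cr) ∧
    cl ⊔ cr = ⊤ ∧ cl ⊓ cr = ⊥

/-! ### Auxiliary material for the patch lattice theorem -/

section PatchAuxGeneral
variable {L : Type*} [Lattice L]

lemma pf_covby_squeeze {a b w : L} (h : a ⋖ b) (h1 : a ≤ w) (h2 : w < b) : w = a := by
  rcases h1.eq_or_lt with h3 | h3
  · exact h3.symm
  · exact absurd h2 (h.2 h3)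

lemma pf_covby_squeeze' {a b w : L} (h : a ⋖ b) (h1 : a < w) (h2 : w ≤ b) : w = b := by
  rcases h2.eq_or_lt with h3 | h3
  · exact h3
  · exact absurd h3 (h.2 h1)

end PatchAuxGeneral

section PatchAuxFinite
variable {L : Type*} [Lattice L] [Fintype L]

lemma pf_exists_le_covby {a b : L} (h : a < b) : ∃ w, a ≤ w ∧ w ⋖ b := by
  obtain ⟨w, hw, hmax⟩ := Set.Finite.exists_maximalFor id {w | a ≤ w ∧ w < b}
    (Set.toFinite _) ⟨a, le_refl a, h⟩
  exact ⟨w, hw.1, hw.2, fun z hz1 hz2 =>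
    absurd (hmax ⟨le_trans hw.1 hz1.le, hz2⟩ hz1.le) (not_le_of_gt hz1)⟩

lemma pf_exists_covby_le {a b : L} (h : a < b) : ∃ w, a ⋖ w ∧ w ≤ b := by
  obtain ⟨w, hw, hmin⟩ := Set.Finite.exists_minimalFor id {w | a < w ∧ w ≤ b}
    (Set.toFinite _) ⟨b, h, le_refl b⟩
  refine ⟨w, ⟨hw.1, fun z hz1 hz2 => ?_⟩, hw.2⟩
  exact hz2.not_ge (hmin ⟨hz1, hz2.le.trans hw.2⟩ hz2.le)

lemma pf_exists_atom_le [OrderBot L] {b : L} (hb : b ≠ ⊥) : ∃ a, (⊥ : L) ⋖ a ∧ a ≤ b :=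
  pf_exists_covby_le (bot_lt_iff_ne_bot.mpr hb)

lemma pf_two_covers {w1 w2 z : L} (h1 : w1 ⋖ z) (h2 : w2 ⋖ z) (hne : w1 ≠ w2) :
    w1 ⊔ w2 = z := by
  have hn : ¬ w2 ≤ w1 := fun h => hne (pf_covby_squeeze h2 h h1.lt)
  have hlt : w1 < w1 ⊔ w2 := lt_of_le_of_ne le_sup_left (fun h => hn (h ▸ le_sup_right))
  exact pf_covby_squeeze' h1 hlt (sup_le h1.le h2.le)

lemma pf_infIrred_of_unique_cover {z t : L} (hzt : z ⋖ t) (huniq : ∀ u, z ⋖ u → u = t) :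
    InfIrred z := by
  constructor
  · exact fun hmax => hzt.lt.not_ge (hmax hzt.le)
  · intro b c hbc
    by_contra hcon
    push_neg at hcon
    obtain ⟨hb, hc⟩ := hcon
    have hzb : z < b := lt_of_le_of_ne (by rw [← hbc]; exact inf_le_left) (Ne.symm hb)
    have hzc : z < c := lt_of_le_of_ne (by rw [← hbc]; exact inf_le_right) (Ne.symm hc)
    obtain ⟨u1, hu1, hub⟩ := pf_exists_covby_le hzb
    obtain ⟨u2, hu2, huc⟩ := pf_exists_covby_le hzc
    have e1 := huniq u1 hu1
    have e2 := huniq u2 hu2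
    have : t ≤ z := by rw [← hbc]; exact le_inf (e1 ▸ hub) (e2 ▸ huc)
    exact hzt.lt.not_ge this

lemma pf_not_supIrred [OrderBot L] {z : L} (hz : z ≠ ⊥) (h : ¬ SupIrred z) :
    ∃ w1 w2, w1 ⋖ z ∧ w2 ⋖ z ∧ w1 ≠ w2 := by
  rw [SupIrred] at h
  push_neg at h
  have hmin : ¬ IsMin z := fun hm => hz (le_antisymm (hm bot_le) bot_le)
  obtain ⟨b, c, h1, h2, h3⟩ := h hmin
  have hbz : b < z := lt_of_le_of_ne (h1 ▸ le_sup_left) h2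
  have hcz : c < z := lt_of_le_of_ne (h1 ▸ le_sup_right) h3
  obtain ⟨w1, hbw, hw1⟩ := pf_exists_le_covby hbz
  obtain ⟨w2, hcw, hw2⟩ := pf_exists_le_covby hcz
  refine ⟨w1, w2, hw1, hw2, ?_⟩
  rintro rfl
  have : z ≤ w1 := h1 ▸ sup_le hbw hcw
  exact hw1.lt.not_ge this

end PatchAuxFinite

section PatchAuxPlanar
variable {L : Type*} [Lattice L] {f g : L → ℕ}

lemma pf_lor (hfg : ∀ x y : L, x ≤ y ↔ f x ≤ f y ∧ g x ≤ g y) {a b : L}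
    (hab : ¬ a ≤ b) (hba : ¬ b ≤ a) :
    (f a < f b ∧ g b < g a) ∨ (f b < f a ∧ g a < g b) := by
  have h1 : ¬ (f a ≤ f b ∧ g a ≤ g b) := fun h => hab ((hfg a b).mpr h)
  have h2 : ¬ (f b ≤ f a ∧ g b ≤ g a) := fun h => hba ((hfg b a).mpr h)
  omega

lemma pf_mid (hfg : ∀ x y : L, x ≤ y ↔ f x ≤ f y ∧ g x ≤ g y) {a b c : L}
    (hab : ¬ a ≤ b) (hba : ¬ b ≤ a) (hbc : ¬ b ≤ c) (hcb : ¬ c ≤ b)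
    (hac : ¬ a ≤ c) (hca : ¬ c ≤ a) :
    b ⊓ c ≤ a ∨ a ⊓ c ≤ b ∨ a ⊓ b ≤ c := by
  have key : ∀ x y z : L, ¬ x ≤ y → ¬ y ≤ x → ¬ y ≤ z → ¬ z ≤ y →
      f x < f y → f y < f z → x ⊓ z ≤ y := by
    intro x y z h1 h2 h3 h4 hf1 hf2
    have hg1 : g y < g x := by
      rcases pf_lor hfg h1 h2 with ⟨_, h⟩ | ⟨h, _⟩
      · exact h
      · omega
    have hg2 : g z < g y := by
      rcases pf_lor hfg h3 h4 with ⟨_, h⟩ | ⟨h, _⟩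
      · exact h
      · omega
    have hx := (hfg (x ⊓ z) x).mp inf_le_left
    have hz := (hfg (x ⊓ z) z).mp inf_le_right
    exact (hfg _ _).mpr ⟨by omega, by omega⟩
  rcases pf_lor hfg hab hba with ⟨h1, _⟩ | ⟨h1, _⟩ <;>
    rcases pf_lor hfg hbc hcb with ⟨h2, _⟩ | ⟨h2, _⟩ <;>
      rcases pf_lor hfg hac hca with ⟨h3, _⟩ | ⟨h3, _⟩
  · exact Or.inr (Or.inl (key a b c hab hba hbc hcb h1 h2))
  · omega
  · exact Or.inr (Or.inr (key a c b hac hca hcb hbc h3 h2))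
  · exact Or.inl (by rw [inf_comm]; exact key c a b hca hac hab hba h3 h1)
  · exact Or.inl (key b a c hba hab hac hca h1 h3)
  · exact Or.inr (Or.inr (by rw [inf_comm]; exact key b c a hbc hcb hca hac h2 h3))
  · omega
  · exact Or.inr (Or.inl (by rw [inf_comm]; exact key c b a hcb hbc hba hab h2 h1))

end PatchAuxPlanar

namespace LatCon
variable {α : Type*} [Lattice α]

/-- The all relation as a congruence. -/
def allCon : LatCon α :=
  ⟨fun _ _ => True, fun _ => trivial, fun _ => trivial, fun _ _ => trivial,
   fun _ _ => trivial, fun _ _ => trivial⟩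

lemma top_r (a b : α) : (⊤ : LatCon α).r a b :=
  (le_top (a := (allCon : LatCon α))) a b trivial

lemma eq_top_of_r_bot_top [BoundedOrder α] {θ : LatCon α} (h : θ.r ⊥ ⊤) : θ = ⊤ := by
  refine le_antisymm le_top ?_
  intro a b _
  have h1 : θ.r a ⊤ := by simpa using θ.sup_comp (θ.refl a) h
  have h2 : θ.r b ⊤ := by simpa using θ.sup_comp (θ.refl b) h
  exact θ.trans h1 (θ.symm h2)

/-- Explicit description of the congruence generated by a pair. -/
def genC (a b : α) : LatCon α where
  r x y := ∀ c : LatCon α, c.r a b → c.r x y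
  refl x := fun c _ => c.refl x
  symm h := fun c hc => c.symm (h c hc)
  trans h1 h2 := fun c hc => c.trans (h1 c hc) (h2 c hc)
  sup_comp h1 h2 := fun c hc => c.sup_comp (h1 c hc) (h2 c hc)
  inf_comp h1 h2 := fun c hc => c.inf_comp (h1 c hc) (h2 c hc)

lemma genC_r_self (a b : α) : (genC a b).r a b := fun _ hc => hc

lemma genC_le {a b : α} {θ : LatCon α} (h : θ.r a b) : genC a b ≤ θ :=
  fun _ _ hxy => hxy θ h

/-- The join of two congruences, described via transitive chains. -/
def joinRel (θ φ : LatCon α) : α → α → Prop :=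
  Relation.TransGen (fun a b => θ.r a b ∨ φ.r a b)

lemma joinRel_lift_sup {θ φ : LatCon α} {a b : α} (c : α) (h : joinRel θ φ a b) :
    joinRel θ φ (a ⊔ c) (b ⊔ c) := by
  induction h with
  | single h =>
      refine Relation.TransGen.single ?_
      exact h.imp (fun h => θ.sup_comp h (θ.refl c)) (fun h => φ.sup_comp h (φ.refl c))
  | tail _ h IH =>
      refine IH.tail ?_
      exact h.imp (fun h => θ.sup_comp h (θ.refl c)) (fun h => φ.sup_comp h (φ.refl c))

lemma joinRel_lift_inf {θ φ : LatCon α} {a b : α} (c : α) (h : joinRel θ φ a b) :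
    joinRel θ φ (a ⊓ c) (b ⊓ c) := by
  induction h with
  | single h =>
      refine Relation.TransGen.single ?_
      exact h.imp (fun h => θ.inf_comp h (θ.refl c)) (fun h => φ.inf_comp h (φ.refl c))
  | tail _ h IH =>
      refine IH.tail ?_
      exact h.imp (fun h => θ.inf_comp h (θ.refl c)) (fun h => φ.inf_comp h (φ.refl c))

def joinCon (θ φ : LatCon α) : LatCon α where
  r := joinRel θ φ
  refl a := Relation.TransGen.single (Or.inl (θ.refl a))
  symm {a b} h := by
    induction h with
    | single h =>
        refine Relation.TransGen.single ?_
        exact h.imp θ.symm φ.symm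
    | tail _ h IH =>
        refine Relation.TransGen.trans ?_ IH
        refine Relation.TransGen.single ?_
        exact h.imp θ.symm φ.symm
  trans h1 h2 := h1.trans h2
  sup_comp {a b c d} h1 h2 := by
    have e1 := joinRel_lift_sup c h1
    have e2 := joinRel_lift_sup b h2
    rw [sup_comm c b, sup_comm d b] at e2
    exact e1.trans e2
  inf_comp {a b c d} h1 h2 := by
    have e1 := joinRel_lift_inf c h1
    have e2 := joinRel_lift_inf b h2
    rw [inf_comm c b, inf_comm d b] at e2
    exact e1.trans e2

lemma joinCon_eq (θ φ : LatCon α) : θ ⊔ φ = joinCon θ φ := by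
  refine le_antisymm (sup_le ?_ ?_) ?_
  · exact fun a b h => Relation.TransGen.single (Or.inl h)
  · exact fun a b h => Relation.TransGen.single (Or.inr h)
  · intro a b h
    induction h with
    | single h =>
        rcases h with h | h
        · exact (le_sup_left (a := θ) (b := φ)) _ _ h
        · exact (le_sup_right (a := θ) (b := φ)) _ _ h
    | tail _ h IH =>
        refine (θ ⊔ φ).trans IH ?_
        rcases h with h | h
        · exact (le_sup_left (a := θ) (b := φ)) _ _ h
        · exact (le_sup_right (a := θ) (b := φ)) _ _ h

lemma prime_split {θ φ : LatCon α} {p q : α} (hpq : p ⋖ q) (h : (θ ⊔ φ).r p q) :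
    θ.r p q ∨ φ.r p q := by
  rw [joinCon_eq] at h
  have hrange : ∀ z : α, (z ⊔ p) ⊓ q = p ∨ (z ⊔ p) ⊓ q = q := by
    intro z
    rcases (inf_le_right : (z ⊔ p) ⊓ q ≤ q).eq_or_lt with h1 | h1
    · exact Or.inr h1
    · exact Or.inl (pf_covby_squeeze hpq (le_inf le_sup_right hpq.le) h1)
  have hstep : ∀ {a b : α}, (θ.r a b ∨ φ.r a b) →
      (θ.r ((a ⊔ p) ⊓ q) ((b ⊔ p) ⊓ q) ∨ φ.r ((a ⊔ p) ⊓ q) ((b ⊔ p) ⊓ q)) := by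
    intro a b h
    exact h.imp (fun h => θ.inf_comp (θ.sup_comp h (θ.refl p)) (θ.refl q))
      (fun h => φ.inf_comp (φ.sup_comp h (φ.refl p)) (φ.refl q))
  have main : ∀ {a b : α}, joinRel θ φ a b →
      (a ⊔ p) ⊓ q = p → (b ⊔ p) ⊓ q = q → θ.r p q ∨ φ.r p q := by
    intro a b h
    induction h with
    | single h => intro ha hb; have := hstep h; rw [ha, hb] at this; exact this
    | @tail b' c' _ h IH =>
        intro ha hb
        rcases hrange b' with hm | hm
        · have := hstep h; rw [hm, hb] at this; exact this
        · exact IH ha hm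
  have e1 : (p ⊔ p) ⊓ q = p := by rw [sup_idem]; exact inf_eq_left.mpr hpq.le
  have e2 : (q ⊔ p) ⊓ q = q := inf_eq_right.mpr le_sup_left
  exact main h e1 e2

/-- A two-class congruence from a prime ideal `(c]` with complementary
principal filter `[w)`. -/
def twoClass (c w : α) (htot : ∀ z : α, z ≤ c ∨ w ≤ z) (hwc : ¬ w ≤ c) : LatCon α where
  r a b := (a ≤ c ∧ b ≤ c) ∨ (w ≤ a ∧ w ≤ b)
  refl a := (htot a).imp (fun h => ⟨h, h⟩) (fun h => ⟨h, h⟩)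
  symm h := h.imp And.symm And.symm
  trans {a b c'} h1 h2 := by
    rcases h1 with ⟨h1a, h1b⟩ | ⟨h1a, h1b⟩ <;> rcases h2 with ⟨h2a, h2b⟩ | ⟨h2a, h2b⟩
    · exact Or.inl ⟨h1a, h2b⟩
    · exact absurd (h2a.trans h1b) hwc
    · exact absurd (h1b.trans h2a) hwc
    · exact Or.inr ⟨h1a, h2b⟩
  sup_comp {a b c' d} h1 h2 := by
    rcases h1 with ⟨h1a, h1b⟩ | ⟨h1a, h1b⟩ <;> rcases h2 with ⟨h2a, h2b⟩ | ⟨h2a, h2b⟩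
    · exact Or.inl ⟨sup_le h1a h2a, sup_le h1b h2b⟩
    · exact Or.inr ⟨h2a.trans le_sup_right, h2b.trans le_sup_right⟩
    · exact Or.inr ⟨h1a.trans le_sup_left, h1b.trans le_sup_left⟩
    · exact Or.inr ⟨h1a.trans le_sup_left, h1b.trans le_sup_left⟩
  inf_comp {a b c' d} h1 h2 := by
    rcases h1 with ⟨h1a, h1b⟩ | ⟨h1a, h1b⟩ <;> rcases h2 with ⟨h2a, h2b⟩ | ⟨h2a, h2b⟩
    · exact Or.inl ⟨inf_le_left.trans h1a, inf_le_left.trans h1b⟩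
    · exact Or.inl ⟨inf_le_left.trans h1a, inf_le_left.trans h1b⟩
    · exact Or.inl ⟨inf_le_right.trans h2a, inf_le_right.trans h2b⟩
    · exact Or.inr ⟨le_inf h1a h2a, le_inf h1b h2b⟩

lemma twoClass_r {c w : α} (htot : ∀ z : α, z ≤ c ∨ w ≤ z) (hwc : ¬ w ≤ c) {a b : α} :
    (twoClass c w htot hwc).r a b ↔ (a ≤ c ∧ b ≤ c) ∨ (w ≤ a ∧ w ≤ b) := Iff.rfl

end LatCon

section PatchTemplate
variable {L : Type*} [Lattice L] [Fintype L] [BoundedOrder L]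

/-- The main combinatorial "kill" template for planar semimodular lattices. -/
lemma pf_template
    (hsm : Semimodular L) {f g : L → ℕ}
    (hfg : ∀ x y : L, x ≤ y ↔ f x ≤ f y ∧ g x ≤ g y)
    (W : L → Prop) (x x' c : L)
    (hx : x' ⋖ x) (hxc : x' ≤ c)
    (hW0 : ∀ z, W z → ¬ z ≤ c)
    (hW1 : ∀ z, W z → ¬ x ≤ z)
    (hW2 : ∀ z, W z → x' ≤ z)
    (hW3 : ∀ z, W z → ∀ u, z ⋖ u → W u ∨ x ≤ u)
    (hW5 : ∀ z, W z → ∀ w, w ⋖ z → W w ∨ w ≤ c)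
    (hW4 : ∀ z, W z → ¬ (SupIrred z ∧ InfIrred z)) :
    ∀ z, ¬ W z := by
  by_contra hcon
  push_neg at hcon
  obtain ⟨z0, hz0⟩ := hcon
  obtain ⟨z, hz, hzmax⟩ := Set.Finite.exists_maximalFor id {z | W z} (Set.toFinite _) ⟨z0, hz0⟩
  have hz : W z := hz
  -- meets with x
  have meetW : ∀ w, W w → x ⊓ w = x' := by
    intro w hw
    have h2 : x' ≤ x ⊓ w := le_inf hx.le (hW2 w hw)
    rcases (inf_le_left : x ⊓ w ≤ x).eq_or_lt with h3 | h3
    · exact absurd (h3 ▸ inf_le_right) (hW1 w hw)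
    · exact pf_covby_squeeze hx h2 h3
  have hxz : ¬ x ≤ z := hW1 z hz
  have covT : z ⋖ x ⊔ z := hsm x z (by rw [meetW z hz]; exact hx)
  have hzt : z < x ⊔ z := covT.lt
  have covuniq : ∀ u, z ⋖ u → u = x ⊔ z := by
    intro u hu
    rcases hW3 z hz u hu with h | h
    · exact absurd (hzmax h hu.le) hu.lt.not_ge
    · exact (pf_covby_squeeze' hu hzt (sup_le h hu.le)).symm
  have hinfz : InfIrred z := pf_infIrred_of_unique_cover covT covuniq
  have hsupz : ¬ SupIrred z := fun hs => hW4 z hz ⟨hs, hinfz⟩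
  have hzbot : z ≠ ⊥ := fun h => hW0 z hz (h ▸ bot_le)
  obtain ⟨w1, w2, hw1, hw2, hwne⟩ := pf_not_supIrred hzbot hsupz
  -- cell facts for W-covers below z
  have cell : ∀ w, W w → w ⋖ z →
      (w ⋖ x ⊔ w) ∧ ¬ (x ⊔ w ≤ z) ∧ ¬ (z ≤ x ⊔ w) ∧ (x ⊔ w) ⊓ z = w := by
    intro w hw hwz
    have c1 : w ⋖ x ⊔ w := hsm x w (by rw [meetW w hw]; exact hx)
    have c2 : ¬ x ⊔ w ≤ z := fun h => hxz (le_sup_left.trans h)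
    have hwt : x ⊔ w ≤ x ⊔ z := sup_le le_sup_left (hwz.le.trans le_sup_right)
    have c3 : ¬ z ≤ x ⊔ w := by
      intro h
      have he : x ⊔ w = x ⊔ z := le_antisymm hwt (sup_le le_sup_left h)
      exact ((he ▸ c1).2 hwz.lt) hzt
    have c4 : (x ⊔ w) ⊓ z = w := by
      have h1 : w ≤ (x ⊔ w) ⊓ z := le_inf le_sup_right hwz.le
      have h2 : (x ⊔ w) ⊓ z < z := lt_of_le_of_ne inf_le_right (fun h => c3 (h ▸ inf_le_left))
      exact pf_covby_squeeze hwz h1 h2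
    exact ⟨c1, c2, c3, c4⟩
  have cellT : ∀ w, W w → w ⋖ z → (x ⊔ w) ⋖ (x ⊔ z) := by
    intro w hw hwz
    obtain ⟨c1, c2, c3, c4⟩ := cell w hw hwz
    have h5 : z ⊓ (x ⊔ w) ⋖ z := by rw [inf_comm, c4]; exact hwz
    have h6 := hsm z (x ⊔ w) h5
    have he : z ⊔ (x ⊔ w) = x ⊔ z := by
      refine le_antisymm (sup_le le_sup_right (sup_le le_sup_left (hwz.le.trans le_sup_right))) ?_
      exact sup_le (le_sup_left.trans le_sup_right) le_sup_left
    rwa [he] at h6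
  -- the beta configuration
  have beta : ∀ wa q, W wa → q ≤ c → wa ⋖ z → q ⋖ z → wa ≠ q → False := by
    intro wa q hwaW hqc hwa hq hne
    obtain ⟨c11, c12, c13, c14⟩ := cell wa hwaW hwa
    have hqz : z ⊓ c = q := by
      have h1 : q ≤ z ⊓ c := le_inf hq.le hqc
      have h2 : z ⊓ c < z := lt_of_le_of_ne inf_le_left (fun h => hW0 z hz (h ▸ inf_le_right))
      exact pf_covby_squeeze hq h1 h2
    have hx'q : x' ≤ q := by rw [← hqz]; exact le_inf (hW2 z hz) hxc
    have hmq : x ⊓ q = x' := by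
      have h1 : x' ≤ x ⊓ q := le_inf hx.le hx'q
      have h2 : x ⊓ q < x := lt_of_le_of_ne inf_le_left
        (fun h => hxz ((h ▸ inf_le_right).trans hq.le))
      exact pf_covby_squeeze hx h1 h2
    have ce1 : q ⋖ x ⊔ q := hsm x q (by rw [hmq]; exact hx)
    have heet : x ⊔ q ≤ x ⊔ z := sup_le le_sup_left (hq.le.trans le_sup_right)
    have ce2 : ¬ x ⊔ q ≤ z := fun h => hxz (le_sup_left.trans h)
    have ce3 : ¬ z ≤ x ⊔ q := by
      intro h
      have he : x ⊔ q = x ⊔ z := le_antisymm heet (sup_le le_sup_left h)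
      exact ((he ▸ ce1).2 hq.lt) hzt
    have ce4 : (x ⊔ q) ⊓ z = q := by
      have h1 : q ≤ (x ⊔ q) ⊓ z := le_inf le_sup_right hq.le
      have h2 : (x ⊔ q) ⊓ z < z := lt_of_le_of_ne inf_le_right (fun h => ce3 (h ▸ inf_le_left))
      exact pf_covby_squeeze hq h1 h2
    have hwj : wa ⊔ q = z := pf_two_covers hwa hq hne
    have het1 : ¬ x ⊔ q ≤ x ⊔ wa := by
      intro h
      have hq1 : q ≤ (x ⊔ wa) ⊓ z := le_inf (le_sup_right.trans h) hq.le
      rw [c14] at hq1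
      have : wa = q := pf_covby_squeeze hq hq1 hwa.lt
      exact hW0 wa hwaW (this ▸ hqc)
    have ht1e : ¬ x ⊔ wa ≤ x ⊔ q := by
      intro h
      have : z ≤ x ⊔ q := by
        rw [← hwj]; exact sup_le (le_sup_right.trans h) le_sup_right
      exact ce3 this
    rcases pf_mid hfg ht1e het1 ce2 ce3 c12 c13 with hm | hm | hm
    · -- (x⊔q) ⊓ z ≤ x ⊔ wa
      rw [ce4] at hm
      have hq1 : q ≤ (x ⊔ wa) ⊓ z := le_inf hm hq.le
      rw [c14] at hq1
      have : wa = q := pf_covby_squeeze hq hq1 hwa.lt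
      exact hW0 wa hwaW (this ▸ hqc)
    · -- (x⊔wa) ⊓ z ≤ x ⊔ q
      rw [c14] at hm
      exact ce3 (by rw [← hwj]; exact sup_le hm le_sup_right)
    · -- (x⊔wa) ⊓ (x⊔q) ≤ z
      exact hxz ((le_inf le_sup_left le_sup_left).trans hm)
  -- the main case analysis
  rcases hW5 z hz w1 hw1 with hw1W | hw1c <;> rcases hW5 z hz w2 hw2 with hw2W | hw2c
  · -- alpha : both covers in W
    obtain ⟨c11, c12, c13, c14⟩ := cell w1 hw1W hw1
    obtain ⟨c21, c22, c23, c24⟩ := cell w2 hw2W hw2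
    have hT1 := cellT w1 hw1W hw1
    have hT2 := cellT w2 hw2W hw2
    have ht12 : x ⊔ w1 ≠ x ⊔ w2 := by
      intro h
      have hj := pf_two_covers hw1 hw2 hwne
      have : z ≤ x ⊔ w1 := by
        rw [← hj]; exact sup_le le_sup_right (h ▸ le_sup_right)
      exact c13 this
    have h12 : ¬ x ⊔ w1 ≤ x ⊔ w2 := by
      intro h
      rcases h.eq_or_lt with h' | h'
      · exact ht12 h'
      · exact (hT1.2 h') hT2.lt
    have h21 : ¬ x ⊔ w2 ≤ x ⊔ w1 := by
      intro h
      rcases h.eq_or_lt with h' | h'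
      · exact ht12 h'.symm
      · exact (hT2.2 h') hT1.lt
    rcases pf_mid hfg h12 h21 c22 c23 c12 c13 with hm | hm | hm
    · -- (x⊔w2) ⊓ z ≤ x⊔w1
      rw [c24] at hm
      have hq1 : w2 ≤ (x ⊔ w1) ⊓ z := le_inf hm hw2.le
      rw [c14] at hq1
      exact hwne (pf_covby_squeeze hw2 hq1 hw1.lt)
    · rw [c14] at hm
      have hq1 : w1 ≤ (x ⊔ w2) ⊓ z := le_inf hm hw1.le
      rw [c24] at hq1
      exact hwne (pf_covby_squeeze hw1 hq1 hw2.lt).symm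
    · exact hxz ((le_inf le_sup_left le_sup_left).trans hm)
  · exact beta w1 w2 hw1W hw2c hw1 hw2 hwne
  · exact beta w2 w1 hw2W hw1c hw2 hw1 hwne.symm
  · -- both covers below c : impossible
    have h2 : z ⊓ c < z := lt_of_le_of_ne inf_le_left (fun h => hW0 z hz (h ▸ inf_le_right))
    have e1 : z ⊓ c = w1 := pf_covby_squeeze hw1 (le_inf hw1.le hw1c) h2
    have e2 : z ⊓ c = w2 := pf_covby_squeeze hw2 (le_inf hw2.le hw2c) h2
    exact hwne (e1.symm.trans e2)

end PatchTemplate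

section PatchMain
variable {L : Type*} [Lattice L] [Fintype L] [BoundedOrder L] {cl cr : L} {f g : L → ℕ}

/-- Claim A: everything not below `cr` is above the atom `a ≤ cl`. -/
lemma pf_claimA
    (hfg : ∀ x y : L, x ≤ y ↔ f x ≤ f y ∧ g x ≤ g y) (hsm : Semimodular L)
    (honly : ∀ x : L, DoublyIrred x → x = cl ∨ x = cr)
    (hinf : cl ⊓ cr = ⊥)
    {a : L} (ha : (⊥ : L) ⋖ a) (hacl : a ≤ cl) :
    ∀ z, z ≤ cr ∨ a ≤ z := by
  have htemp := pf_template hsm hfg (fun z => ¬ z ≤ cr ∧ ¬ a ≤ z) a ⊥ cr ha bot_le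
    (fun z hz => hz.1) (fun z hz => hz.2) (fun z _ => bot_le)
    (fun z hz u hu => by
      by_cases h : a ≤ u
      · exact Or.inr h
      · exact Or.inl ⟨fun hc => hz.1 (hu.le.trans hc), h⟩)
    (fun z hz w hw => by
      by_cases h : w ≤ cr
      · exact Or.inr h
      · exact Or.inl ⟨h, fun hc => hz.2 (hc.trans hw.le)⟩)
    (fun z hz hdi => by
      rcases honly z hdi with rfl | rfl
      · exact hz.2 hacl
      · exact hz.1 le_rfl)
  intro z
  by_cases h : z ≤ cr
  · exact Or.inl h
  · by_cases h2 : a ≤ z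
    · exact Or.inr h2
    · exact absurd ⟨h, h2⟩ (htemp z)

/-- The left-chain induction towards primality of `(e]`. -/
lemma pf_LC
    (hfg : ∀ x y : L, x ≤ y ↔ f x ≤ f y ∧ g x ≤ g y) (hsm : Semimodular L)
    (honly : ∀ x : L, DoublyIrred x → x = cl ∨ x = cr)
    {e : L} (hcre : cr ≤ e) :
    ∀ c', c' ≤ cl → c' ≤ e → ∀ z, ¬ z ≤ e → c' ≤ z := by
  intro c'
  induction c' using IsWellFounded.induction (r := ((· < ·) : L → L → Prop)) with
  | _ c' IH =>
    intro hc'cl hc'e z hz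
    by_cases hbot : c' = ⊥
    · exact hbot ▸ bot_le
    · obtain ⟨w, hwle, hwcov⟩ := pf_exists_le_covby (bot_lt_iff_ne_bot.mpr hbot)
      have Hw := IH w hwcov.lt (hwcov.lt.le.trans hc'cl) (hwcov.lt.le.trans hc'e)
      have htemp := pf_template hsm hfg (fun z => ¬ z ≤ e ∧ ¬ c' ≤ z) c' w e hwcov
        (hwcov.lt.le.trans hc'e)
        (fun z hz => hz.1) (fun z hz => hz.2)
        (fun z hz => Hw z hz.1)
        (fun z hz u hu => by
          by_cases h : c' ≤ u
          · exact Or.inr h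
          · exact Or.inl ⟨fun hc => hz.1 (hu.le.trans hc), h⟩)
        (fun z hz w' hw' => by
          by_cases h : w' ≤ e
          · exact Or.inr h
          · exact Or.inl ⟨h, fun hc => hz.2 (hc.trans hw'.le)⟩)
        (fun z hz hdi => by
          rcases honly z hdi with rfl | rfl
          · exact hz.2 hc'cl
          · exact hz.1 hcre)
      by_contra hcz
      exact htemp z ⟨hz, hcz⟩

/-- Primality of the ideal `(e]` for `cr ≤ e` with `cl ≰ e`. -/
lemma pf_e_prime
    (hfg : ∀ x y : L, x ≤ y ↔ f x ≤ f y ∧ g x ≤ g y) (hsm : Semimodular L)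
    (honly : ∀ x : L, DoublyIrred x → x = cl ∨ x = cr)
    {e : L} (hcre : cr ≤ e) (hecl : ¬ cl ≤ e) :
    ∃ x0 : L, ¬ x0 ≤ e ∧ ∀ z, z ≤ e ∨ x0 ≤ z := by
  obtain ⟨x0, hx0, hx0min⟩ := Set.Finite.exists_minimalFor id {z : L | z ≤ cl ∧ ¬ z ≤ e}
    (Set.toFinite _) ⟨cl, le_rfl, hecl⟩
  have hx0cl : x0 ≤ cl := hx0.1
  have hx0e : ¬ x0 ≤ e := hx0.2
  have hcov : x0 ⊓ e ⋖ x0 := by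
    have hlt : x0 ⊓ e < x0 := lt_of_le_of_ne inf_le_left (fun h => hx0e (h ▸ inf_le_right))
    refine ⟨hlt, ?_⟩
    intro zz h1 h2
    obtain ⟨w, hzw, hwcov⟩ := pf_exists_le_covby h2
    have hwcl : w ≤ cl := hwcov.lt.le.trans hx0cl
    have hwe : w ≤ e := by
      by_contra hwe
      exact hwcov.lt.not_ge (hx0min ⟨hwcl, hwe⟩ hwcov.lt.le)
    have hc : zz ≤ x0 ⊓ e := le_inf (hzw.trans hwcov.lt.le) (hzw.trans hwe)
    exact h1.not_ge hc
  have hLC := pf_LC hfg hsm honly hcre (x0 ⊓ e) (inf_le_left.trans hx0cl) inf_le_right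
  have htemp := pf_template hsm hfg (fun z => ¬ z ≤ e ∧ ¬ x0 ≤ z) x0 (x0 ⊓ e) e hcov
    inf_le_right
    (fun z hz => hz.1) (fun z hz => hz.2)
    (fun z hz => hLC z hz.1)
    (fun z hz u hu => by
      by_cases h : x0 ≤ u
      · exact Or.inr h
      · exact Or.inl ⟨fun hc => hz.1 (hu.le.trans hc), h⟩)
    (fun z hz w' hw' => by
      by_cases h : w' ≤ e
      · exact Or.inr h
      · exact Or.inl ⟨h, fun hc => hz.2 (hc.trans hw'.le)⟩)
    (fun z hz hdi => by
      rcases honly z hdi with rfl | rfl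
      · exact hz.2 hx0cl
      · exact hz.1 hcre)
  refine ⟨x0, hx0e, ?_⟩
  intro z
  by_cases h : z ≤ e
  · exact Or.inl h
  · by_cases h2 : x0 ≤ z
    · exact Or.inr h2
    · exact absurd ⟨h, h2⟩ (htemp z)

/-- The key dichotomy for congruences in a patch lattice. -/
lemma pf_dich
    {al ar : L}
    (hclt : cl ⋖ ⊤) (hcrt : cr ⋖ ⊤)
    (halcl : al ≤ cl) (harcr : ar ≤ cr)
    (halcr : ¬ al ≤ cr) (harcl : ¬ ar ≤ cl)
    (hinf : cl ⊓ cr = ⊥)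
    (totr : ∀ z, z ≤ cr ∨ al ≤ z) (totl : ∀ z, z ≤ cl ∨ ar ≤ z)
    (θ : LatCon L) :
    θ ≤ LatCon.twoClass cr al totr halcr ∨ LatCon.twoClass cl ar totl harcl ≤ θ := by
  by_cases h : θ ≤ LatCon.twoClass cr al totr halcr
  · exact Or.inl h
  · right
    have hpair : ∃ a b, θ.r a b ∧ ¬ (LatCon.twoClass cr al totr halcr).r a b := by
      by_contra hcon
      push_neg at hcon
      exact h (fun a b hab => hcon a b hab)
    obtain ⟨a, b, hab, hnab⟩ := hpair
    have main : ∀ a b : L, θ.r a b → a ≤ cr → al ≤ b →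
        LatCon.twoClass cl ar totl harcl ≤ θ := by
      intro a b hab ha hb
      have hbcr : ¬ b ≤ cr := fun h => halcr (hb.trans h)
      have hmj : θ.r (a ⊓ b) (a ⊔ b) := by
        have h1 : θ.r (a ⊓ b) b := by simpa using θ.inf_comp hab (θ.refl b)
        have h2 : θ.r (a ⊔ b) b := by simpa using θ.sup_comp hab (θ.refl b)
        exact θ.trans h1 (θ.symm h2)
      have hmcr : a ⊓ b ≤ cr := inf_le_left.trans ha
      have hjcr : ¬ a ⊔ b ≤ cr := fun h => hbcr (le_sup_right.trans h)
      have hcrtop : θ.r cr ⊤ := by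
        have h3 := θ.sup_comp hmj (θ.refl cr)
        have e1 : (a ⊓ b) ⊔ cr = cr := sup_eq_right.mpr hmcr
        have e2 : (a ⊔ b) ⊔ cr = ⊤ := by
          have hlt : cr < (a ⊔ b) ⊔ cr :=
            lt_of_le_of_ne le_sup_right (fun h => hjcr (le_sup_left.trans h.symm.le))
          rcases (le_top : (a ⊔ b) ⊔ cr ≤ ⊤).eq_or_lt with h4 | h4
          · exact h4
          · exact absurd h4 (hcrt.2 hlt)
        rw [e1, e2] at h3
        exact h3
      have hbotcl : θ.r ⊥ cl := by
        have h3 := θ.inf_comp hcrtop (θ.refl cl)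
        rwa [inf_comm cr cl, hinf, top_inf_eq] at h3
      intro xx yy hxy
      rcases hxy with ⟨h1, h2⟩ | ⟨h1, h2⟩
      · have k : ∀ w : L, w ≤ cl → θ.r ⊥ w := by
          intro w hw
          have h4 := θ.inf_comp (θ.refl w) hbotcl
          rwa [inf_bot_eq, inf_eq_left.mpr hw] at h4
        exact θ.trans (θ.symm (k xx h1)) (k yy h2)
      · have k : ∀ w : L, ar ≤ w → θ.r w ⊤ := by
          intro w hw
          have hwcl : ¬ w ≤ cl := fun h => harcl (hw.trans h)
          have e : w ⊔ cl = ⊤ := by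
            have hlt : cl < w ⊔ cl :=
              lt_of_le_of_ne le_sup_right (fun h => hwcl (le_sup_left.trans h.symm.le))
            rcases (le_top : w ⊔ cl ≤ ⊤).eq_or_lt with h4 | h4
            · exact h4
            · exact absurd h4 (hclt.2 hlt)
          have h4 := θ.sup_comp (θ.refl w) hbotcl
          rwa [sup_bot_eq, e] at h4
        exact θ.trans (k xx h1) (θ.symm (k yy h2))
    rcases totr a with ha | ha <;> rcases totr b with hb | hb
    · exact absurd (Or.inl ⟨ha, hb⟩) hnab
    · exact main a b hab ha hb
    · exact main b a (θ.symm hab) hb ha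
    · exact absurd (Or.inr ⟨ha, hb⟩) hnab

end PatchMain

section PatchFinal
variable {L : Type*} [Lattice L] [Fintype L] [BoundedOrder L]

lemma pf_rect_swap {cl cr : L} (h : IsRectangularWith L cl cr) :
    IsRectangularWith L cr cl := by
  obtain ⟨h1, h2, h3, h4, h5, h6, h7, h8⟩ := h
  exact ⟨h1, h2, h3.symm, h5, h4, fun x hx => (h6 x hx).symm,
    by rwa [sup_comm], by rwa [inf_comm]⟩

lemma pf_forward {cl cr : L} (hrect : IsRectangularWith L cl cr)
    (hclt : cl ⋖ ⊤) (hcrt : cr ⋖ ⊤) :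
    ∃ u v : LatCon L, u ≠ v ∧ u ⋖ ⊤ ∧ v ⋖ ⊤ ∧
      (∀ w : LatCon L, w ⋖ ⊤ → w = u ∨ w = v) ∧
      u ⊓ v ⋖ u ∧ u ⊓ v ⋖ v ∧
      (∀ w : LatCon L, w = ⊤ ∨ w = u ∨ w = v ∨ w ≤ u ⊓ v) := by
  obtain ⟨⟨f, g, hfg⟩, hsm, hne, hdil, hdir, honly, hsup, hinf⟩ := hrect
  have hclbot : cl ≠ ⊥ := fun h => hdil.1.1 (h ▸ isMin_bot)
  have hcrbot : cr ≠ ⊥ := fun h => hdir.1.1 (h ▸ isMin_bot)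
  have hcltop : cl ≠ ⊤ := fun h => hdil.2.1 (h ▸ isMax_top)
  have hcrtop : cr ≠ ⊤ := fun h => hdir.2.1 (h ▸ isMax_top)
  obtain ⟨al, hal, halcl⟩ := pf_exists_atom_le hclbot
  obtain ⟨ar, har, harcr⟩ := pf_exists_atom_le hcrbot
  have halbot : al ≠ ⊥ := hal.lt.ne'
  have harbot : ar ≠ ⊥ := har.lt.ne'
  have halcr : ¬ al ≤ cr := fun h => halbot (le_bot_iff.mp (hinf ▸ le_inf halcl h))
  have harcl : ¬ ar ≤ cl := fun h => harbot (le_bot_iff.mp (hinf ▸ le_inf h harcr))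
  have totr : ∀ z, z ≤ cr ∨ al ≤ z := pf_claimA hfg hsm honly hinf hal halcl
  have totl : ∀ z, z ≤ cl ∨ ar ≤ z :=
    pf_claimA hfg hsm (fun x hx => (honly x hx).symm) (by rwa [inf_comm]) har harcr
  set δl := LatCon.twoClass cl ar totl harcl with hδl_def
  set δr := LatCon.twoClass cr al totr halcr with hδr_def
  have hδl_cr_top : δl.r cr ⊤ := Or.inr ⟨harcr, le_top⟩
  have hδr_cl_top : δr.r cl ⊤ := Or.inr ⟨halcl, le_top⟩
  have hδl_not : ¬ δl.r cl ⊤ := by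
    rintro (⟨_, h⟩ | ⟨h, _⟩)
    · exact hcltop (top_le_iff.mp h)
    · exact harcl h
  have hδr_not : ¬ δr.r cr ⊤ := by
    rintro (⟨_, h⟩ | ⟨h, _⟩)
    · exact hcrtop (top_le_iff.mp h)
    · exact halcr h
  have hδl_netop : δl ≠ ⊤ := fun h => hδl_not (h ▸ LatCon.top_r cl ⊤)
  have hδr_netop : δr ≠ ⊤ := fun h => hδr_not (h ▸ LatCon.top_r cr ⊤)
  have hδne : δl ≠ δr := fun h => hδr_not (h ▸ hδl_cr_top)
  have hjoin : δl ⊔ δr = ⊤ := by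
    have h1 : (δl ⊔ δr).r cr ⊤ := (le_sup_left : δl ≤ δl ⊔ δr) cr ⊤ hδl_cr_top
    have h2 : (δl ⊔ δr).r cl ⊤ := (le_sup_right : δr ≤ δl ⊔ δr) cl ⊤ hδr_cl_top
    have h3 : (δl ⊔ δr).r ⊥ ⊤ := by
      have h4 := (δl ⊔ δr).inf_comp h2 h1
      rwa [hinf, inf_idem] at h4
    exact LatCon.eq_top_of_r_bot_top h3
  have D1 : ∀ θ : LatCon L, θ ≤ δr ∨ δl ≤ θ :=
    pf_dich hclt hcrt halcl harcr halcr harcl hinf totr totl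
  have D2 : ∀ θ : LatCon L, θ ≤ δl ∨ δr ≤ θ :=
    pf_dich hcrt hclt harcr halcl harcl halcr (by rwa [inf_comm]) totl totr
  have htopθ : ∀ θ : LatCon L, δl ≤ θ → δr ≤ θ → θ = ⊤ := by
    intro θ h1 h2
    exact top_le_iff.mp (by rw [← hjoin]; exact sup_le h1 h2)
  have covl : δl ⋖ ⊤ := by
    refine ⟨lt_top_iff_ne_top.mpr hδl_netop, ?_⟩
    intro θ h1 h2
    rcases D2 θ with h | h
    · exact h1.not_ge h
    · exact h2.ne (htopθ θ h1.le h)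
  have covr : δr ⋖ ⊤ := by
    refine ⟨lt_top_iff_ne_top.mpr hδr_netop, ?_⟩
    intro θ h1 h2
    rcases D1 θ with h | h
    · exact h1.not_ge h
    · exact h2.ne (htopθ θ h h1.le)
  refine ⟨δl, δr, hδne, covl, covr, ?_, ?_, ?_, ?_⟩
  · -- only two coatoms
    intro w hw
    rcases D1 w with h | h
    · rcases h.eq_or_lt with h2 | h2
      · exact Or.inr h2
      · exact absurd (lt_top_iff_ne_top.mpr hδr_netop) (hw.2 h2)
    · rcases h.eq_or_lt with h2 | h2
      · exact Or.inl h2.symm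
      · rcases D2 w with h3 | h3
        · exact absurd h3 h2.not_ge
        · exact absurd (htopθ w h2.le h3) hw.lt.ne
  · -- δl ⊓ δr ⋖ δl
    have hne2 : δl ⊓ δr ≠ δl := by
      intro h
      have h2 : δl ≤ δr := by rw [← h]; exact inf_le_right
      exact hδr_not (h2 cr ⊤ hδl_cr_top)
    refine ⟨lt_of_le_of_ne inf_le_left hne2, ?_⟩
    intro θ h1 h2
    rcases D1 θ with h | h
    · exact h1.not_ge (le_inf h2.le h)
    · exact h2.not_ge h
  · -- δl ⊓ δr ⋖ δr
    have hne2 : δl ⊓ δr ≠ δr := by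
      intro h
      have h2 : δr ≤ δl := by rw [← h]; exact inf_le_left
      exact hδl_not (h2 cl ⊤ hδr_cl_top)
    refine ⟨lt_of_le_of_ne inf_le_right hne2, ?_⟩
    intro θ h1 h2
    rcases D2 θ with h | h
    · exact h1.not_ge (le_inf h h2.le)
    · exact h2.not_ge h
  · -- every congruence is ⊤, δl, δr or below the meet
    intro w
    by_cases h1 : w = ⊤
    · exact Or.inl h1
    by_cases h2 : w = δl
    · exact Or.inr (Or.inl h2)
    by_cases h3 : w = δr
    · exact Or.inr (Or.inr (Or.inl h3))
    refine Or.inr (Or.inr (Or.inr ?_))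
    have hr : w ≤ δr := by
      rcases D1 w with h | h
      · exact h
      · rcases h.eq_or_lt with h4 | h4
        · exact absurd h4.symm h2
        · rcases D2 w with h5 | h5
          · exact absurd h5 h4.not_ge
          · exact absurd (htopθ w h4.le h5) h1
    have hl : w ≤ δl := by
      rcases D2 w with h | h
      · exact h
      · rcases h.eq_or_lt with h4 | h4
        · exact absurd h4.symm h3
        · rcases D1 w with h5 | h5
          · exact absurd h5 h4.not_ge
          · exact absurd (htopθ w h5 h4.le) h1
    exact le_inf hl hr

lemma pf_backward {cl cr : L} (hrect : IsRectangularWith L cl cr)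
    (hshape : ∃ u v : LatCon L, u ≠ v ∧ u ⋖ ⊤ ∧ v ⋖ ⊤ ∧
      (∀ w : LatCon L, w ⋖ ⊤ → w = u ∨ w = v) ∧
      u ⊓ v ⋖ u ∧ u ⊓ v ⋖ v ∧
      (∀ w : LatCon L, w = ⊤ ∨ w = u ∨ w = v ∨ w ≤ u ⊓ v)) :
    cr ⋖ ⊤ := by
  obtain ⟨⟨f, g, hfg⟩, hsm, hne, hdil, hdir, honly, hsup, hinf⟩ := hrect
  obtain ⟨u, v, huv, hu, hv, huniq, hcov1, hcov2, hall⟩ := hshape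
  have hclbot : cl ≠ ⊥ := fun h => hdil.1.1 (h ▸ isMin_bot)
  have hcrbot : cr ≠ ⊥ := fun h => hdir.1.1 (h ▸ isMin_bot)
  have hcltop : cl ≠ ⊤ := fun h => hdil.2.1 (h ▸ isMax_top)
  have hcrtop : cr ≠ ⊤ := fun h => hdir.2.1 (h ▸ isMax_top)
  obtain ⟨al, hal, halcl⟩ := pf_exists_atom_le hclbot
  obtain ⟨ar, har, harcr⟩ := pf_exists_atom_le hcrbot
  have halbot : al ≠ ⊥ := hal.lt.ne'
  have harbot : ar ≠ ⊥ := har.lt.ne'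
  have halcr : ¬ al ≤ cr := fun h => halbot (le_bot_iff.mp (hinf ▸ le_inf halcl h))
  have harcl : ¬ ar ≤ cl := fun h => harbot (le_bot_iff.mp (hinf ▸ le_inf h harcr))
  have totr : ∀ z, z ≤ cr ∨ al ≤ z := pf_claimA hfg hsm honly hinf hal halcl
  have totl : ∀ z, z ≤ cl ∨ ar ≤ z :=
    pf_claimA hfg hsm (fun x hx => (honly x hx).symm) (by rwa [inf_comm]) har harcr
  -- the unique upper cover of cr
  have halmeet : al ⊓ cr = ⊥ := by
    have h1 : al ⊓ cr < al := lt_of_le_of_ne inf_le_left (fun h => halcr (h ▸ inf_le_right))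
    exact pf_covby_squeeze hal bot_le h1
  have hcre : cr ⋖ al ⊔ cr := hsm al cr (by rw [halmeet]; exact hal)
  rcases eq_or_ne (al ⊔ cr) ⊤ with hetop | hetop
  · exact hetop ▸ hcre
  exfalso
  have hecl : ¬ cl ≤ al ⊔ cr := by
    intro h
    exact hetop (top_le_iff.mp (by rw [← hsup]; exact sup_le h le_sup_right))
  obtain ⟨x0, hx0e, tote⟩ := pf_e_prime hfg hsm honly (le_sup_right : cr ≤ al ⊔ cr) hecl
  set δl := LatCon.twoClass cl ar totl harcl with hδl_def
  set δr := LatCon.twoClass cr al totr halcr with hδr_def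
  set ε := LatCon.twoClass (al ⊔ cr) x0 tote hx0e with hε_def
  have hδl_cr_top : δl.r cr ⊤ := Or.inr ⟨harcr, le_top⟩
  have hδr_cl_top : δr.r cl ⊤ := Or.inr ⟨halcl, le_top⟩
  have hδl_not : ¬ δl.r cl ⊤ := by
    rintro (⟨_, h⟩ | ⟨h, _⟩)
    · exact hcltop (top_le_iff.mp h)
    · exact harcl h
  have hδr_not : ¬ δr.r cr ⊤ := by
    rintro (⟨_, h⟩ | ⟨h, _⟩)
    · exact hcrtop (top_le_iff.mp h)
    · exact halcr h
  have hδr_notbal : ¬ δr.r ⊥ al := by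
    rintro (⟨_, h⟩ | ⟨h, _⟩)
    · exact halcr h
    · exact halbot (le_bot_iff.mp h)
  have hδl_netop : δl ≠ ⊤ := fun h => hδl_not (h ▸ LatCon.top_r cl ⊤)
  have hδr_netop : δr ≠ ⊤ := fun h => hδr_not (h ▸ LatCon.top_r cr ⊤)
  have hjoin : δl ⊔ δr = ⊤ := by
    have h1 : (δl ⊔ δr).r cr ⊤ := (le_sup_left : δl ≤ δl ⊔ δr) cr ⊤ hδl_cr_top
    have h2 : (δl ⊔ δr).r cl ⊤ := (le_sup_right : δr ≤ δl ⊔ δr) cl ⊤ hδr_cl_top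
    have h3 : (δl ⊔ δr).r ⊥ ⊤ := by
      have h4 := (δl ⊔ δr).inf_comp h2 h1
      rwa [hinf, inf_idem] at h4
    exact LatCon.eq_top_of_r_bot_top h3
  have hune : u ≠ ⊤ := hu.lt.ne
  have hvne : v ≠ ⊤ := hv.lt.ne
  have bound : ∀ w : LatCon L, δl ≤ w → δr ≤ w → w = ⊤ := by
    intro w h1 h2
    exact top_le_iff.mp (by rw [← hjoin]; exact sup_le h1 h2)
  -- the two shape coatoms are exactly δl and δr
  have pair : (δl = u ∧ δr = v) ∨ (δl = v ∧ δr = u) := by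
    rcases hall δl with h1 | h1 | h1 | h1
    · exact absurd h1 hδl_netop
    · rcases hall δr with h2 | h2 | h2 | h2
      · exact absurd h2 hδr_netop
      · exact absurd (bound u h1.le h2.le) hune
      · exact Or.inl ⟨h1, h2⟩
      · exact absurd (bound u h1.le (h2.trans inf_le_left)) hune
    · rcases hall δr with h2 | h2 | h2 | h2
      · exact absurd h2 hδr_netop
      · exact Or.inr ⟨h1, h2⟩
      · exact absurd (bound v h1.le h2.le) hvne
      · exact absurd (bound v h1.le (h2.trans inf_le_right)) hvne
    · rcases hall δr with h2 | h2 | h2 | h2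
      · exact absurd h2 hδr_netop
      · exact absurd (bound u (h1.trans inf_le_left) h2.le) hune
      · exact absurd (bound v (h1.trans inf_le_right) h2.le) hvne
      · exact absurd (bound u (h1.trans inf_le_left) (h2.trans inf_le_left)) hune
  -- the congruence generated by the bottom prime (⊥, al)
  have hXr : (LatCon.genC (⊥ : L) al).r ⊥ al := LatCon.genC_r_self ⊥ al
  have hXuv : LatCon.genC (⊥ : L) al ≤ u ∨ LatCon.genC (⊥ : L) al ≤ v := by
    have hvu : ¬ v ≤ u := by
      intro h
      rcases h.eq_or_lt with h2 | h2
      · exact huv h2.symm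
      · exact (hv.2 h2) (lt_top_iff_ne_top.mpr hune)
    have htopuv : u ⊔ v = ⊤ := by
      have hlt : u < u ⊔ v :=
        lt_of_le_of_ne le_sup_left (fun h => hvu (le_sup_right.trans h.symm.le))
      rcases (le_top : u ⊔ v ≤ ⊤).eq_or_lt with h4 | h4
      · exact h4
      · exact absurd h4 (hu.2 hlt)
    have hsplit := LatCon.prime_split hal (by rw [htopuv]; exact LatCon.top_r ⊥ al)
    exact hsplit.imp LatCon.genC_le LatCon.genC_le
  have hXne : LatCon.genC (⊥ : L) al ≠ ⊤ := by
    rcases hXuv with h | h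
    · exact fun he => hune (top_le_iff.mp (he ▸ h))
    · exact fun he => hvne (top_le_iff.mp (he ▸ h))
  have hXδl : LatCon.genC (⊥ : L) al = δl := by
    have hnotδr : ∀ hh : LatCon.genC (⊥ : L) al = δr, False := by
      intro hh
      exact hδr_notbal (hh ▸ hXr)
    have hnotπ : ¬ LatCon.genC (⊥ : L) al ≤ u ⊓ v := by
      intro h
      have h2 : LatCon.genC (⊥ : L) al ≤ δr := by
        rcases pair with ⟨_, h3⟩ | ⟨_, h3⟩
        · exact h.trans (le_of_le_of_eq inf_le_right h3.symm)
        · exact h.trans (le_of_le_of_eq inf_le_left h3.symm)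
      exact hδr_notbal (h2 ⊥ al hXr)
    rcases hall (LatCon.genC (⊥ : L) al) with h | h | h | h
    · exact absurd h hXne
    · rcases pair with ⟨h2, _⟩ | ⟨_, h2⟩
      · exact h.trans h2.symm
      · exact absurd (h.trans h2.symm) fun hh => hnotδr hh
    · rcases pair with ⟨_, h2⟩ | ⟨h2, _⟩
      · exact absurd (h.trans h2.symm) fun hh => hnotδr hh
      · exact h.trans h2.symm
    · exact absurd h hnotπ
  -- the final contradiction via the third two-class congruence ε
  have hεr : ε.r ⊥ al := Or.inl ⟨bot_le, le_sup_left⟩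
  have hδlε : δl ≤ ε := hXδl ▸ LatCon.genC_le hεr
  have hεcr : ε.r cr ⊤ := hδlε cr ⊤ hδl_cr_top
  rcases hεcr with ⟨_, h3⟩ | ⟨h3, _⟩
  · exact hetop (top_le_iff.mp h3)
  · exact hx0e (h3.trans le_sup_right)

end PatchFinal

/-- A rectangular lattice `L` with corners `cl, cr` is a patch lattice (both corners are
coatoms) iff `Con L` is the glued sum of a finite distributive lattice with the
four-element Boolean lattice `B₂`: the top of `Con L` is covered by exactly two
coatoms `u ≠ v`, both of which cover their meet `u ⊓ v`, and every other congruence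
lies below `u ⊓ v`. -/
theorem patch_iff_conLat_gluedSum_B2 (L : Type*) [Lattice L] [Fintype L]
    [BoundedOrder L] (cl cr : L) (hrect : IsRectangularWith L cl cr) :
    (cl ⋖ ⊤ ∧ cr ⋖ ⊤) ↔
      ∃ u v : LatCon L, u ≠ v ∧ u ⋖ ⊤ ∧ v ⋖ ⊤ ∧
        (∀ w : LatCon L, w ⋖ ⊤ → w = u ∨ w = v) ∧
        u ⊓ v ⋖ u ∧ u ⊓ v ⋖ v ∧
        (∀ w : LatCon L, w = ⊤ ∨ w = u ∨ w = v ∨ w ≤ u ⊓ v) := by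
  constructor
  · rintro ⟨hclt, hcrt⟩
    exact pf_forward hrect hclt hcrt
  · intro hshape
    exact ⟨pf_backward (pf_rect_swap hrect) hshape, pf_backward hrect hshape⟩
end

section
/- For a slim rectangular lattice L with lower-left boundary chain C_l and lower-right boundary chain C_r, the map ψ : x ↦ (x ∧ c_l, x ∧ c_r) is a meet-embedding of L into the grid G = C_l × C_r that preserves the bounds 0 and 1. -/
section SRAux

open scoped Classical

variable {L : Type*} [Lattice L] [Fintype L]

private lemma fin_exists_minimal {α : Type*} [Preorder α] (s : Finset α) (h : s.Nonempty) :
    ∃ m ∈ s, ∀ x ∈ s, ¬x < m := by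
  obtain ⟨m, hm, hmin⟩ := s.exists_minimal h
  exact ⟨m, hm, fun x hx hlt => hlt.not_ge (hmin hx hlt.le)⟩

private lemma fin_exists_maximal {α : Type*} [Preorder α] (s : Finset α) (h : s.Nonempty) :
    ∃ m ∈ s, ∀ x ∈ s, ¬m < x := by
  obtain ⟨m, hm, hmax⟩ := s.exists_maximal h
  exact ⟨m, hm, fun x hx hlt => hlt.not_ge (hmax hx hlt.le)⟩

private lemma exists_covBy_above {a b : L} (h : a < b) : ∃ c, a ⋖ c ∧ c ≤ b := by
  classical
  obtain ⟨c, hc, hmin⟩ :=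
    fin_exists_minimal ((Finset.univ : Finset L).filter fun c => a < c ∧ c ≤ b)
      ⟨b, by simp [h]⟩
  simp only [Finset.mem_filter, Finset.mem_univ, true_and] at hc hmin
  exact ⟨c, ⟨hc.1, fun z hz hz' => hmin z ⟨hz, hz'.le.trans hc.2⟩ hz'⟩, hc.2⟩

private lemma exists_covBy_below {a b : L} (h : a < b) : ∃ c, a ≤ c ∧ c ⋖ b := by
  classical
  obtain ⟨c, hc, hmax⟩ :=
    fin_exists_maximal ((Finset.univ : Finset L).filter fun c => a ≤ c ∧ c < b)
      ⟨a, by simp [h]⟩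
  simp only [Finset.mem_filter, Finset.mem_univ, true_and] at hc hmax
  exact ⟨c, hc.1, hc.2, fun z hz hz' => hmax z ⟨hc.1.trans hz.le, hz'⟩ hz⟩

private lemma card_le_of_le {a b : L} (h : a ≤ b) :
    ((Finset.univ : Finset L).filter fun z => z ≤ a).card ≤
      ((Finset.univ : Finset L).filter fun z => z ≤ b).card := by
  apply Finset.card_le_card
  intro z hz
  simp only [Finset.mem_filter, Finset.mem_univ, true_and] at hz ⊢
  exact hz.trans h

private lemma card_lt_of_lt {a b : L} (h : a < b) :
    ((Finset.univ : Finset L).filter fun z => z ≤ a).card <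
      ((Finset.univ : Finset L).filter fun z => z ≤ b).card := by
  apply Finset.card_lt_card
  rw [Finset.ssubset_iff_of_subset]
  · refine ⟨b, by simp, ?_⟩
    simp only [Finset.mem_filter, Finset.mem_univ, true_and]
    exact h.not_ge
  · intro z hz
    simp only [Finset.mem_filter, Finset.mem_univ, true_and] at hz ⊢
    exact hz.trans h.le

/-- In a slim planar semimodular lattice, no element has three distinct covers. -/
private lemma cov2 (hpl : PlanarLat L) (hsm : Semimodular L) (hslim : SlimLat L)
    {p a b c : L} (ha : p ⋖ a) (hb : p ⋖ b) (hc : p ⋖ c) :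
    a = b ∨ a = c ∨ b = c := by
  by_contra hne
  push_neg at hne
  obtain ⟨f, g, hfg⟩ := hpl
  have incomp : ∀ {u v : L}, p ⋖ u → p ⋖ v → u ≠ v → ¬u ≤ v := by
    intro u v hu hv huv hle
    exact hv.2 hu.lt (lt_of_le_of_ne hle huv)
  have minf : ∀ {u v : L}, p ⋖ u → p ⋖ v → u ≠ v → u ⊓ v = p := by
    intro u v hu hv huv
    by_contra hne'
    have h1 : p ≤ u ⊓ v := le_inf hu.le hv.le
    have h2 : u ⊓ v < u :=
      lt_of_le_of_ne inf_le_left fun hh => incomp hu hv huv (by rw [← hh]; exact inf_le_right)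
    exact hu.2 (lt_of_le_of_ne h1 (Ne.symm hne')) h2
  have fne : ∀ {u v : L}, p ⋖ u → p ⋖ v → u ≠ v → f u ≠ f v := by
    intro u v hu hv huv hfe
    rcases le_total (g u) (g v) with h | h
    · exact incomp hu hv huv ((hfg u v).mpr ⟨hfe.le, h⟩)
    · exact incomp hv hu (Ne.symm huv) ((hfg v u).mpr ⟨hfe.ge, h⟩)
  have mid : ∀ u v w : L, p ⋖ u → p ⋖ v → p ⋖ w → u ≠ v → u ≠ w → v ≠ w →
      f u < f v → f v < f w → False := by
    intro u v w hu hv hw huv huw hvw hf1 hf2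
    have gvu : g v < g u := by
      by_contra hg
      exact incomp hu hv huv ((hfg u v).mpr ⟨hf1.le, not_lt.mp hg⟩)
    have hut : f u ≤ f (u ⊔ w) ∧ g u ≤ g (u ⊔ w) := (hfg u (u ⊔ w)).mp le_sup_left
    have hwt : f w ≤ f (u ⊔ w) ∧ g w ≤ g (u ⊔ w) := (hfg w (u ⊔ w)).mp le_sup_right
    have hvt : v ≤ u ⊔ w :=
      (hfg v (u ⊔ w)).mpr ⟨le_of_lt (lt_of_lt_of_le hf2 hwt.1),
        le_of_lt (lt_of_lt_of_le gvu hut.2)⟩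
    have cwt : w ⋖ u ⊔ w := hsm u w (by rw [minf hu hw huw]; exact hu)
    have cut : u ⋖ u ⊔ w := by
      have := hsm w u (by rw [minf hw hu (Ne.symm huw)]; exact hw)
      rwa [sup_comm w u] at this
    have juv : u ⊔ v = u ⊔ w := by
      have h1 : u < u ⊔ v :=
        lt_of_le_of_ne le_sup_left fun hh => incomp hv hu (Ne.symm huv) (le_sup_right.trans hh.ge)
      have h2 : u ⊔ v ≤ u ⊔ w := sup_le le_sup_left hvt
      rcases eq_or_lt_of_le h2 with h | h
      · exact h
      · exact absurd h (cut.2 h1)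
    have jvw : v ⊔ w = u ⊔ w := by
      have h1 : w < v ⊔ w :=
        lt_of_le_of_ne le_sup_right fun hh => incomp hv hw hvw (le_sup_left.trans hh.ge)
      have h2 : v ⊔ w ≤ u ⊔ w := sup_le hvt le_sup_right
      rcases eq_or_lt_of_le h2 with h | h
      · exact h
      · exact absurd h (cwt.2 h1)
    exact hslim ⟨u, v, w, huv, huw, hvw, by rw [minf hu hv huv, minf hv hw hvw],
      by rw [minf hu hw huw, minf hv hw hvw], by rw [juv, jvw], by rw [jvw]⟩
  obtain ⟨hab, hac, hbc⟩ := hne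
  rcases lt_trichotomy (f a) (f b) with h1 | h1 | h1
  · rcases lt_trichotomy (f b) (f c) with h2 | h2 | h2
    · exact mid a b c ha hb hc hab hac hbc h1 h2
    · exact fne hb hc hbc h2
    · rcases lt_trichotomy (f a) (f c) with h3 | h3 | h3
      · exact mid a c b ha hc hb hac hab (Ne.symm hbc) h3 h2
      · exact fne ha hc hac h3
      · exact mid c a b hc ha hb (Ne.symm hac) (Ne.symm hbc) hab h3 h1
  · exact fne ha hb hab h1
  · rcases lt_trichotomy (f a) (f c) with h3 | h3 | h3
    · exact mid b a c hb ha hc (Ne.symm hab) hbc hac h1 h3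
    · exact fne ha hc hac h3
    · rcases lt_trichotomy (f b) (f c) with h2 | h2 | h2
      · exact mid b c a hb hc ha hbc (Ne.symm hab) (Ne.symm hac) h2 h3
      · exact fne hb hc hbc h2
      · exact mid c b a hc hb ha (Ne.symm hbc) (Ne.symm hac) (Ne.symm hab) h2 h1

private lemma no_pair [BoundedOrder L] {cl cr : L} (hrect : IsRectangularWith L cl cr)
    (hslim : SlimLat L) :
    ¬∃ x y : L, x ⋖ y ∧ x ⊓ cl = y ⊓ cl ∧ x ⊓ cr = y ⊓ cr := by
  obtain ⟨hpl, hsm, -, -, -, honly, htop, -⟩ := hrect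
  intro hex
  have hBadne : ∃ n, ∃ x y : L, x ⋖ y ∧ x ⊓ cl = y ⊓ cl ∧ x ⊓ cr = y ⊓ cr ∧
      ((Finset.univ : Finset L).filter fun z => z ≤ x ⊓ cl).card +
        ((Finset.univ : Finset L).filter fun z => z ≤ x ⊓ cr).card = n := by
    obtain ⟨x, y, h1, h2, h3⟩ := hex
    exact ⟨_, x, y, h1, h2, h3, rfl⟩
  obtain ⟨x, y, hxy, hel, her, hn⟩ := Nat.find_spec hBadne
  set α := x ⊓ cl with hαdef
  set β := x ⊓ cr with hβdef
  have hαcl : α ≤ cl := by rw [hαdef]; exact inf_le_right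
  have hβcr : β ≤ cr := by rw [hβdef]; exact inf_le_right
  have hne_top : ¬(α = cl ∧ β = cr) := by
    rintro ⟨h1, h2⟩
    have h3 : (⊤ : L) ≤ x := by
      rw [← htop]
      exact sup_le (inf_eq_right.mp (hαdef.symm.trans h1)) (inf_eq_right.mp (hβdef.symm.trans h2))
    exact (lt_irrefl x) (hxy.lt.trans_le (le_top.trans h3))
  have hγ0ex : ∃ γ, (α ⋖ γ ∧ γ ≤ cl) ∨ (β ⋖ γ ∧ γ ≤ cr) := by
    rcases eq_or_lt_of_le hαcl with h | h
    · have hb : β < cr := lt_of_le_of_ne hβcr fun hh => hne_top ⟨h, hh⟩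
      obtain ⟨γ, h1, h2⟩ := exists_covBy_above hb
      exact ⟨γ, Or.inr ⟨h1, h2⟩⟩
    · obtain ⟨γ, h1, h2⟩ := exists_covBy_above h
      exact ⟨γ, Or.inl ⟨h1, h2⟩⟩
  obtain ⟨γ0, hγ0⟩ := hγ0ex
  have γ_cov : ∀ {γ w : L}, ((α ⋖ γ ∧ γ ≤ cl) ∨ (β ⋖ γ ∧ γ ≤ cr)) →
      w ⊓ cl = α → w ⊓ cr = β → (w ⋖ w ⊔ γ) ∧ ¬γ ≤ w := by
    rintro γ w (⟨hcv, hle⟩ | ⟨hcv, hle⟩) h1 h2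
    · have hnle : ¬γ ≤ w := fun hh => hcv.lt.not_ge (by rw [← h1]; exact le_inf hh hle)
      have hinf : γ ⊓ w = α := by
        apply le_antisymm
        · rw [← h1]; exact le_inf inf_le_right (inf_le_left.trans hle)
        · exact le_inf hcv.le (by rw [← h1]; exact inf_le_left)
      have hcov := hsm γ w (by rw [hinf]; exact hcv)
      rw [sup_comm γ w] at hcov
      exact ⟨hcov, hnle⟩
    · have hnle : ¬γ ≤ w := fun hh => hcv.lt.not_ge (by rw [← h2]; exact le_inf hh hle)
      have hinf : γ ⊓ w = β := by
        apply le_antisymm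
        · rw [← h2]; exact le_inf inf_le_right (inf_le_left.trans hle)
        · exact le_inf hcv.le (by rw [← h2]; exact inf_le_left)
      have hcov := hsm γ w (by rw [hinf]; exact hcv)
      rw [sup_comm γ w] at hcov
      exact ⟨hcov, hnle⟩
  have sqz : ∀ {lo z hi : L}, lo ≤ z → z ≤ hi → lo ⊓ cl = α → lo ⊓ cr = β →
      hi ⊓ cl = α → hi ⊓ cr = β → z ⊓ cl = α ∧ z ⊓ cr = β := by
    intro lo z hi h1 h2 h3 h4 h5 h6
    constructor
    · exact le_antisymm (by rw [← h5]; exact inf_le_inf_right _ h2)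
        (by rw [← h3]; exact inf_le_inf_right _ h1)
    · exact le_antisymm (by rw [← h6]; exact inf_le_inf_right _ h2)
        (by rw [← h4]; exact inf_le_inf_right _ h1)
  have pair : ∀ {u v : L}, u ⋖ v → u ⊓ cl = α → u ⊓ cr = β → v ⊓ cl = α → v ⊓ cr = β →
      ∀ {γ}, ((α ⋖ γ ∧ γ ≤ cl) ∨ (β ⋖ γ ∧ γ ≤ cr)) →
      ∀ z, u ⋖ z → z = v ∨ z = u ⊔ γ := by
    intro u v huv hu1 hu2 hv1 hv2 γ hγ z hz
    have h1 := γ_cov hγ hu1 hu2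
    have hnev : u ⊔ γ ≠ v := fun hh => (γ_cov hγ hv1 hv2).2 (by rw [← hh]; exact le_sup_right)
    rcases cov2 hpl hsm hslim hz huv h1.1 with h | h | h
    · exact Or.inl h
    · exact Or.inr h
    · exact absurd h.symm hnev
  set F := (Finset.univ : Finset L).filter (fun w => w ⊓ cl = α ∧ w ⊓ cr = β) with hFdef
  have memF : ∀ w : L, w ∈ F ↔ (w ⊓ cl = α ∧ w ⊓ cr = β) := by
    intro w
    rw [hFdef]
    simp only [Finset.mem_filter, Finset.mem_univ, true_and]
  have hxF : x ∈ F := (memF x).mpr ⟨hαdef.symm, hβdef.symm⟩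
  have hyF : y ∈ F := (memF y).mpr ⟨hel.symm, her.symm⟩
  have chainF : ∀ w₁ ∈ F, ∀ w₂ ∈ F, w₁ ≤ w₂ ∨ w₂ ≤ w₁ := by
    intro w₁ h₁ w₂ h₂
    rw [memF] at h₁ h₂
    by_contra hcon
    push_neg at hcon
    have hw1 : (w₁ ⊓ w₂) ⊓ cl = α := by
      rw [inf_assoc, h₂.1]
      exact inf_eq_right.mpr (by rw [← h₁.1]; exact inf_le_left)
    have hw2 : (w₁ ⊓ w₂) ⊓ cr = β := by
      rw [inf_assoc, h₂.2]
      exact inf_eq_right.mpr (by rw [← h₁.2]; exact inf_le_left)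
    have hlt1 : w₁ ⊓ w₂ < w₁ :=
      lt_of_le_of_ne inf_le_left fun hh => hcon.1 (by rw [← hh]; exact inf_le_right)
    have hlt2 : w₁ ⊓ w₂ < w₂ :=
      lt_of_le_of_ne inf_le_right fun hh => hcon.2 (by rw [← hh]; exact inf_le_left)
    obtain ⟨z₁, hz₁, hz₁le⟩ := exists_covBy_above hlt1
    obtain ⟨z₂, hz₂, hz₂le⟩ := exists_covBy_above hlt2
    have hz1f := sqz hz₁.le hz₁le hw1 hw2 h₁.1 h₁.2
    have hz2f := sqz hz₂.le hz₂le hw1 hw2 h₂.1 h₂.2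
    have hne12 : z₂ ≠ z₁ := fun hh =>
      hz₂.lt.not_ge (le_inf (by rw [hh]; exact hz₁le) hz₂le)
    rcases pair hz₁ hw1 hw2 hz1f.1 hz1f.2 hγ0 z₂ hz₂ with h | h
    · exact hne12 h
    · rcases hγ0 with ⟨hcv, hle⟩ | ⟨hcv, hle⟩
      · have hgz : γ0 ≤ z₂ ⊓ cl := le_inf (by rw [h]; exact le_sup_right) hle
        rw [hz2f.1] at hgz
        exact hcv.lt.not_ge hgz
      · have hgz : γ0 ≤ z₂ ⊓ cr := le_inf (by rw [h]; exact le_sup_right) hle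
        rw [hz2f.2] at hgz
        exact hcv.lt.not_ge hgz
  obtain ⟨ystar, hyF', hymax⟩ := fin_exists_maximal F ⟨x, hxF⟩
  have hyfib : ystar ⊓ cl = α ∧ ystar ⊓ cr = β := (memF ystar).mp hyF'
  have hmaxle : ∀ z ∈ F, z ≤ ystar := by
    intro z hz
    rcases chainF z hz ystar hyF' with h | h
    · exact h
    · rcases eq_or_lt_of_le h with h' | h'
      · exact h'.ge
      · exact absurd h' (hymax z hz)
  have hFxne : ∃ w, w ∈ F.erase ystar := by
    rcases eq_or_ne x ystar with h | h
    · exact ⟨y, Finset.mem_erase.mpr ⟨fun hh => hxy.ne (h.trans hh.symm), hyF⟩⟩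
    · exact ⟨x, Finset.mem_erase.mpr ⟨h, hxF⟩⟩
  obtain ⟨w0, hw0⟩ := hFxne
  obtain ⟨xh, hxh', hxhmax⟩ := fin_exists_maximal (F.erase ystar) ⟨w0, hw0⟩
  have hxhF : xh ∈ F := (Finset.mem_erase.mp hxh').2
  have hxhne : xh ≠ ystar := (Finset.mem_erase.mp hxh').1
  have hxhfib : xh ⊓ cl = α ∧ xh ⊓ cr = β := (memF xh).mp hxhF
  have hxhlt : xh < ystar := lt_of_le_of_ne (hmaxle xh hxhF) hxhne
  have hFle : ∀ z ∈ F, z ≠ ystar → z ≤ xh := by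
    intro z hz hzne
    rcases chainF z hz xh hxhF with h | h
    · exact h
    · rcases eq_or_lt_of_le h with h' | h'
      · exact h'.ge
      · exact absurd h' (hxhmax z (Finset.mem_erase.mpr ⟨hzne, hz⟩))
  have hcovxy : xh ⋖ ystar := by
    refine ⟨hxhlt, fun z h1 h2 => ?_⟩
    have hzf := sqz h1.le h2.le hxhfib.1 hxhfib.2 hyfib.1 hyfib.2
    exact h1.not_ge (hFle z ((memF z).mpr hzf) h2.ne)
  have pcov := γ_cov hγ0 hxhfib.1 hxhfib.2
  have hcovs := pair hcovxy hxhfib.1 hxhfib.2 hyfib.1 hyfib.2 hγ0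
  have hγles : ∀ {γ : L}, ((α ⋖ γ ∧ γ ≤ cl) ∨ (β ⋖ γ ∧ γ ≤ cr)) → γ ≤ xh ⊔ γ0 := by
    intro γ hγ
    have h1 := γ_cov hγ hxhfib.1 hxhfib.2
    rcases hcovs (xh ⊔ γ) h1.1 with h | h
    · exact absurd (show γ ≤ ystar by rw [← h]; exact le_sup_right)
        (γ_cov hγ hyfib.1 hyfib.2).2
    · rw [← h]; exact le_sup_right
  have hsney : ¬xh ⊔ γ0 ≤ ystar := fun hh =>
    (γ_cov hγ0 hyfib.1 hyfib.2).2 (le_sup_right.trans hh)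
  have hinfs : ystar ⊓ (xh ⊔ γ0) = xh := by
    have h3 : xh ≤ ystar ⊓ (xh ⊔ γ0) := le_inf hxhlt.le le_sup_left
    rcases eq_or_lt_of_le h3 with h | h
    · exact h.symm
    · exfalso
      have h4 : ystar ⊓ (xh ⊔ γ0) < xh ⊔ γ0 :=
        lt_of_le_of_ne inf_le_right fun hh => hsney (by rw [← hh]; exact inf_le_left)
      exact pcov.1.2 h h4
  have hts : ystar ⋖ ystar ⊔ (xh ⊔ γ0) := by
    have h := hsm (xh ⊔ γ0) ystar (by rw [inf_comm (xh ⊔ γ0) ystar, hinfs]; exact pcov.1)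
    rwa [sup_comm (xh ⊔ γ0) ystar] at h
  have hunique : ∀ z, ystar ⋖ z → z = ystar ⊔ (xh ⊔ γ0) := by
    intro z hz
    have hge1 : α ≤ z ⊓ cl := by rw [← hyfib.1]; exact inf_le_inf_right _ hz.le
    have hge2 : β ≤ z ⊓ cr := by rw [← hyfib.2]; exact inf_le_inf_right _ hz.le
    have hnf : ¬(z ⊓ cl = α ∧ z ⊓ cr = β) := fun hh =>
      hz.lt.not_ge (hmaxle z ((memF z).mpr hh))
    have hγzex : ∃ γ, ((α ⋖ γ ∧ γ ≤ cl) ∨ (β ⋖ γ ∧ γ ≤ cr)) ∧ γ ≤ z := by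
      by_cases hc1 : z ⊓ cl = α
      · have hc2 : β < z ⊓ cr := lt_of_le_of_ne hge2 fun hh => hnf ⟨hc1, hh.symm⟩
        obtain ⟨γ, hg1, hg2⟩ := exists_covBy_above hc2
        exact ⟨γ, Or.inr ⟨hg1, hg2.trans inf_le_right⟩, hg2.trans inf_le_left⟩
      · have hc2 : α < z ⊓ cl := lt_of_le_of_ne hge1 fun hh => hc1 hh.symm
        obtain ⟨γ, hg1, hg2⟩ := exists_covBy_above hc2
        exact ⟨γ, Or.inl ⟨hg1, hg2.trans inf_le_right⟩, hg2.trans inf_le_left⟩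
    obtain ⟨γ, hγ, hγz⟩ := hγzex
    have h1 := γ_cov hγ hyfib.1 hyfib.2
    have h2 : ystar ⊔ γ ≤ z := sup_le hz.le hγz
    have h3 : z = ystar ⊔ γ := by
      rcases eq_or_lt_of_le h2 with h | h
      · exact h.symm
      · exact absurd h (hz.2 h1.1.lt)
    have h4 : ystar ⊔ γ ≤ ystar ⊔ (xh ⊔ γ0) := sup_le le_sup_left ((hγles hγ).trans le_sup_right)
    rcases eq_or_lt_of_le h4 with h | h
    · rw [h3, h]
    · exact absurd h (hts.2 h1.1.lt)
  have hnsup : ¬SupIrred ystar := by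
    intro hsi
    have hii : InfIrred ystar := by
      refine ⟨fun hmax => ?_, ?_⟩
      · have h0 : ystar = ⊤ := hmax.eq_top
        refine hne_top ⟨?_, ?_⟩
        · rw [← hyfib.1, h0, top_inf_eq]
        · rw [← hyfib.2, h0, top_inf_eq]
      · intro b c hbc
        by_contra hcon
        push_neg at hcon
        have hb : ystar < b :=
          lt_of_le_of_ne (by rw [← hbc]; exact inf_le_left) (Ne.symm hcon.1)
        have hc' : ystar < c :=
          lt_of_le_of_ne (by rw [← hbc]; exact inf_le_right) (Ne.symm hcon.2)
        obtain ⟨z1, hz1, hz1le⟩ := exists_covBy_above hb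
        obtain ⟨z2, hz2, hz2le⟩ := exists_covBy_above hc'
        have e1 := hunique z1 hz1
        have e2 := hunique z2 hz2
        have hb1 : ystar ⊔ (xh ⊔ γ0) ≤ b := e1 ▸ hz1le
        have hb2 : ystar ⊔ (xh ⊔ γ0) ≤ c := e2 ▸ hz2le
        have hle' : ystar ⊔ (xh ⊔ γ0) ≤ ystar := (le_inf hb1 hb2).trans hbc.le
        exact hts.lt.not_ge hle'
    rcases honly ystar ⟨hsi, hii⟩ with h | h
    · have hα : α = cl := by rw [← hyfib.1, h, inf_idem]
      have hclxh : cl ≤ xh := inf_eq_right.mp (hxhfib.1.trans hα)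
      exact hxhlt.not_ge (by rw [h]; exact hclxh)
    · have hβ : β = cr := by rw [← hyfib.2, h, inf_idem]
      have hcrxh : cr ≤ xh := inf_eq_right.mp (hxhfib.2.trans hβ)
      exact hxhlt.not_ge (by rw [h]; exact hcrxh)
  have hdec : ∃ b c : L, b ⊔ c = ystar ∧ b ≠ ystar ∧ c ≠ ystar := by
    by_contra hno
    push_neg at hno
    apply hnsup
    constructor
    · exact fun hmin => hmin.not_lt hxhlt
    · intro b c hbc
      by_cases h : b = ystar
      · exact Or.inl h
      · exact Or.inr (hno b c hbc h)
  obtain ⟨b, c, hbc, hbne, hcne⟩ := hdec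
  have hblt : b < ystar := lt_of_le_of_ne (by rw [← hbc]; exact le_sup_left) hbne
  have hclt : c < ystar := lt_of_le_of_ne (by rw [← hbc]; exact le_sup_right) hcne
  have hdex : ∃ d, d < ystar ∧ ¬d ≤ xh := by
    by_cases h : b ≤ xh
    · exact ⟨c, hclt, fun hh => hxhlt.not_ge (by rw [← hbc]; exact sup_le h hh)⟩
    · exact ⟨b, hblt, h⟩
  obtain ⟨d, hdlt, hdn⟩ := hdex
  obtain ⟨q, hqmem, hqmin⟩ := fin_exists_minimal
    ((Finset.univ : Finset L).filter fun z => z ≤ d ∧ ¬z ≤ xh) ⟨d, by simp [hdn]⟩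
  simp only [Finset.mem_filter, Finset.mem_univ, true_and] at hqmem hqmin
  obtain ⟨hqd, hqn⟩ := hqmem
  have hqsup : ∀ z, z < q → z ≤ xh := by
    intro z hz
    by_contra hzz
    exact hqmin z ⟨hz.le.trans hqd, hzz⟩ hz
  have hqbot : q ≠ ⊥ := fun hh => hqn (by rw [hh]; exact bot_le)
  obtain ⟨q', -, hq'cov⟩ := exists_covBy_below (bot_lt_iff_ne_bot.mpr hqbot)
  have hqirr : ∀ z, z < q → z ≤ q' := by
    intro z hz
    have h1 : z ⊔ q' ≤ q := sup_le hz.le hq'cov.le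
    rcases eq_or_lt_of_le h1 with h | h
    · exfalso
      exact hqn (by rw [← h]; exact sup_le (hqsup z hz) (hqsup q' hq'cov.lt))
    · rcases eq_or_lt_of_le (le_sup_right : q' ≤ z ⊔ q') with hh | hh
      · exact le_sup_left.trans hh.ge
      · exact absurd h (hq'cov.2 hh)
  have hqy : q ≤ ystar := hqd.trans hdlt.le
  have hαxh : α ≤ xh := by rw [← hxhfib.1]; exact inf_le_left
  have hβxh : β ≤ xh := by rw [← hxhfib.2]; exact inf_le_left
  have hqcl : ¬q ≤ cl := fun hh => hqn ((le_inf hqy hh).trans (hyfib.1.le.trans hαxh))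
  have hqcr : ¬q ≤ cr := fun hh => hqn ((le_inf hqy hh).trans (hyfib.2.le.trans hβxh))
  have hql : q ⊓ cl ≤ q' :=
    hqirr _ (lt_of_le_of_ne inf_le_left fun hh => hqcl (by rw [← hh]; exact inf_le_right))
  have hqr : q ⊓ cr ≤ q' :=
    hqirr _ (lt_of_le_of_ne inf_le_left fun hh => hqcr (by rw [← hh]; exact inf_le_right))
  have hq'cl : q' ⊓ cl = q ⊓ cl :=
    le_antisymm (inf_le_inf_right _ hq'cov.le) (le_inf hql inf_le_right)
  have hq'cr : q' ⊓ cr = q ⊓ cr :=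
    le_antisymm (inf_le_inf_right _ hq'cov.le) (le_inf hqr inf_le_right)
  have hvle1 : q ⊓ cl ≤ α := by rw [← hyfib.1]; exact inf_le_inf_right _ hqy
  have hvle2 : q ⊓ cr ≤ β := by rw [← hyfib.2]; exact inf_le_inf_right _ hqy
  have hvne : ¬(q ⊓ cl = α ∧ q ⊓ cr = β) := by
    rintro ⟨h1, h2⟩
    exact hqn (hFle q ((memF q).mpr ⟨h1, h2⟩) fun hh => hdlt.not_ge (by rw [← hh]; exact hqd))
  have hlt2 : ((Finset.univ : Finset L).filter fun z => z ≤ q' ⊓ cl).card +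
      ((Finset.univ : Finset L).filter fun z => z ≤ q' ⊓ cr).card < Nat.find hBadne := by
    rw [hq'cl, hq'cr, ← hn]
    rcases eq_or_lt_of_le hvle1 with h1 | h1
    · have h2 : q ⊓ cr < β := lt_of_le_of_ne hvle2 fun hh => hvne ⟨h1, hh⟩
      rw [h1]
      exact Nat.add_lt_add_left (card_lt_of_lt h2) _
    · exact add_lt_add_of_lt_of_le (card_lt_of_lt h1) (card_le_of_le hvle2)
  exact Nat.find_min hBadne hlt2 ⟨q', q, hq'cov, hq'cl, hq'cr, rfl⟩

end SRAux

/-- For a slim rectangular lattice `L` with corners `cl, cr`, the map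
`ψ : x ↦ (x ∧ cl, x ∧ cr)` is a meet-embedding of `L` into the grid
`G = C_l × C_r` (where `C_l = [0, cl]` and `C_r = [0, cr]`, so the grid has bottom
`(0, 0)` and top `(cl, cr)`), and `ψ` preserves the bounds. -/
theorem natural_diagram_meet_embedding (L : Type*) [Lattice L] [Fintype L]
    [BoundedOrder L] (cl cr : L) (hrect : IsRectangularWith L cl cr)
    (hslim : SlimLat L) :
    Function.Injective (fun x : L => (x ⊓ cl, x ⊓ cr)) ∧
      (∀ x y : L, ((x ⊓ y) ⊓ cl, (x ⊓ y) ⊓ cr) =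
        ((x ⊓ cl) ⊓ (y ⊓ cl), (x ⊓ cr) ⊓ (y ⊓ cr))) ∧
      ((⊥ : L) ⊓ cl, (⊥ : L) ⊓ cr) = ((⊥ : L), (⊥ : L)) ∧
      ((⊤ : L) ⊓ cl, (⊤ : L) ⊓ cr) = (cl, cr) := by
  classical
  refine ⟨?_, ?_, ?_, ?_⟩
  · intro a b hab
    simp only [Prod.mk.injEq] at hab
    obtain ⟨h1, h2⟩ := hab
    by_contra hne
    have key : ∀ u v : L, u ⊓ cl = v ⊓ cl → u ⊓ cr = v ⊓ cr → u < v → False := by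
      intro u v k1 k2 hlt
      obtain ⟨z, hz, hzle⟩ := exists_covBy_above hlt
      have e1 : u ⊓ cl = z ⊓ cl :=
        le_antisymm (inf_le_inf_right _ hz.le) (by rw [k1]; exact inf_le_inf_right _ hzle)
      have e2 : u ⊓ cr = z ⊓ cr :=
        le_antisymm (inf_le_inf_right _ hz.le) (by rw [k2]; exact inf_le_inf_right _ hzle)
      exact no_pair hrect hslim ⟨u, z, hz, e1, e2⟩
    by_cases hle : a ≤ b
    · exact key a b h1 h2 (lt_of_le_of_ne hle hne)
    · have hm1 : (a ⊓ b) ⊓ cl = a ⊓ cl := by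
        rw [inf_inf_distrib_right, h1, inf_idem]
      have hm2 : (a ⊓ b) ⊓ cr = a ⊓ cr := by
        rw [inf_inf_distrib_right, h2, inf_idem]
      exact key (a ⊓ b) a hm1 hm2
        (lt_of_le_of_ne inf_le_left fun hh => hle (by rw [← hh]; exact inf_le_right))
  · intro x y
    simp only [Prod.mk.injEq]
    exact ⟨inf_inf_distrib_right x y cl, inf_inf_distrib_right x y cr⟩
  · simp
  · simp
end
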